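/- arXiv:2311.10623 — 4 statements merged into one kernel-verified Lean document; each statement's English description precedes it below -/
import Mathlib

section
/- Minimizer property via a monotone solution of F(ψ, ψ') = const: let F(y,z) = c_n z² - n(n-1) y² with c_n = 4(n-1)/(n-2), n ≥ 3, R > 0. Suppose ψ ∈ C¹([0,R]) with ψ(0) = 0, ψ(R) = 1, ψ' > 0 on (0,R), and F(ψ(r), ψ'(r)) = H for all r ∈ (0,R) and some constant H. Then for any other ψ₂ ∈ C¹([0,R]) with ψ₂(0) = 0, ψ₂(R) = 1, and ψ₂ ≠ ψ, there exist ξ, ξ₂ ∈ (0,R) with ψ₂(ξ) = ψ(ξ₂) and ψ₂'(ξ) > ψ'(ξ₂) > 0; consequently sup_{r ∈ [0,R]} F(ψ₂(r), ψ₂'(r)) > H. -/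
open Real Set Filter

set_option maxHeartbeats 1000000

private lemma anti_aux {f : ℝ → ℝ} {a b : ℝ} (hab : a ≤ b)
    (hc : ContinuousOn f (Icc a b))
    (hd : ∀ x ∈ Ioo a b, ∃ d, d ≤ 0 ∧ HasDerivAt f d x) :
    f b ≤ f a := by
  rcases eq_or_lt_of_le hab with rfl | hab'
  · exact le_rfl
  · have hA : AntitoneOn f (Icc a b) := by
      apply antitoneOn_of_deriv_nonpos (convex_Icc a b) hc
      · intro x hx
        rw [interior_Icc] at hx
        obtain ⟨d, _, hD⟩ := hd x hx
        exact hD.differentiableAt.differentiableWithinAt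
      · intro x hx
        rw [interior_Icc] at hx
        obtain ⟨d, hd0, hD⟩ := hd x hx
        rw [hD.deriv]; exact hd0
    exact hA (left_mem_Icc.mpr hab) (right_mem_Icc.mpr hab) hab

private lemma closure_le_aux {g : ℝ → ℝ} {S T : Set ℝ} {t v : ℝ} (hST : S ⊆ T)
    (hg : ContinuousOn g T) (ht : t ∈ closure S) (htT : t ∈ T)
    (hS : ∀ x ∈ S, g x ≤ v) : g t ≤ v := by
  have hne : (nhdsWithin t S).NeBot := mem_closure_iff_nhdsWithin_neBot.mp ht
  have h1 : Filter.Tendsto g (nhdsWithin t S) (nhds (g t)) :=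
    (hg t htT).mono_left (nhdsWithin_mono t hST)
  exact le_of_tendsto h1 (eventually_nhdsWithin_of_forall hS)

private lemma closure_ge_aux {g : ℝ → ℝ} {S T : Set ℝ} {t v : ℝ} (hST : S ⊆ T)
    (hg : ContinuousOn g T) (ht : t ∈ closure S) (htT : t ∈ T)
    (hS : ∀ x ∈ S, v ≤ g x) : v ≤ g t := by
  have h := closure_le_aux (g := fun x => -(g x)) (v := -v) hST hg.neg ht htT
    (fun x hx => neg_le_neg (hS x hx))
  simpa using h

theorem stmt_7 (n : ℕ) (hn : 3 ≤ n) (c : ℝ) (hc : c = 4 * ((n : ℝ) - 1) / ((n : ℝ) - 2))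
    (R : ℝ) (hR : 0 < R) (H : ℝ)
    (ψ ψ₂ : ℝ → ℝ)
    (hψC : ContDiffOn ℝ 1 ψ (Icc 0 R)) (hψ0 : ψ 0 = 0) (hψR : ψ R = 1)
    (hψ' : ∀ r ∈ Ioo (0 : ℝ) R, 0 < deriv ψ r)
    (hψH : ∀ r ∈ Ioo (0 : ℝ) R, c * (deriv ψ r) ^ 2 - (n : ℝ) * ((n : ℝ) - 1) * (ψ r) ^ 2 = H)
    (hψ₂C : ContDiffOn ℝ 1 ψ₂ (Icc 0 R)) (hψ₂0 : ψ₂ 0 = 0) (hψ₂R : ψ₂ R = 1)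
    (hne : ∃ r ∈ Icc (0 : ℝ) R, ψ₂ r ≠ ψ r) :
    (∃ ξ ∈ Ioo (0 : ℝ) R, ∃ ξ₂ ∈ Ioo (0 : ℝ) R,
        ψ₂ ξ = ψ ξ₂ ∧ deriv ψ₂ ξ > deriv ψ ξ₂ ∧ 0 < deriv ψ ξ₂)
    ∧ sSup ((fun r => c * (deriv ψ₂ r) ^ 2 - (n : ℝ) * ((n : ℝ) - 1) * (ψ₂ r) ^ 2) '' Icc 0 R) > H := by
  have hn3 : (3 : ℝ) ≤ (n : ℝ) := by exact_mod_cast hn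
  set K : ℝ := (n : ℝ) * ((n : ℝ) - 1) with hK
  have hK0 : 0 < K := by nlinarith
  have hc0 : 0 < c := by rw [hc]; exact div_pos (by linarith) (by linarith)
  set k : ℝ := Real.sqrt (K / c) with hkdef
  have hk0 : 0 ≤ k := Real.sqrt_nonneg _
  have hkk : k ^ 2 = K / c := Real.sq_sqrt (div_nonneg hK0.le hc0.le)
  have hkk' : k ^ 2 * c = K := by rw [hkk]; field_simp
  have hψcont : ContinuousOn ψ (Icc 0 R) := hψC.continuousOn
  have hψ₂cont : ContinuousOn ψ₂ (Icc 0 R) := hψ₂C.continuousOn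
  have hψd : ∀ x ∈ Ioo (0 : ℝ) R, HasDerivAt ψ (deriv ψ x) x := fun x hx =>
    ((hψC.differentiableOn one_ne_zero).differentiableAt (Icc_mem_nhds hx.1 hx.2)).hasDerivAt
  have hψ₂d : ∀ x ∈ Ioo (0 : ℝ) R, HasDerivAt ψ₂ (deriv ψ₂ x) x := fun x hx =>
    ((hψ₂C.differentiableOn one_ne_zero).differentiableAt (Icc_mem_nhds hx.1 hx.2)).hasDerivAt
  have hmono : StrictMonoOn ψ (Icc 0 R) :=
    strictMonoOn_of_deriv_pos (convex_Icc 0 R) hψcont (by rw [interior_Icc]; exact hψ')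
  have hψpos : ∀ x ∈ Ioo (0 : ℝ) R, 0 < ψ x := by
    intro x hx
    have := hmono (left_mem_Icc.mpr hR.le) ⟨hx.1.le, hx.2.le⟩ hx.1
    rwa [hψ0] at this
  have hψlt1 : ∀ x ∈ Ioo (0 : ℝ) R, ψ x < 1 := by
    intro x hx
    have := hmono ⟨hx.1.le, hx.2.le⟩ (right_mem_Icc.mpr hR.le) hx.2
    rwa [hψR] at this
  have hodenn : ∀ x ∈ Ioo (0 : ℝ) R, 0 ≤ (H + K * (ψ x) ^ 2) / c := by
    intro x hx
    have h1 := hψH x hx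
    exact div_nonneg (by nlinarith [mul_nonneg hc0.le (sq_nonneg (deriv ψ x))]) hc0.le
  have hode : ∀ x ∈ Ioo (0 : ℝ) R, deriv ψ x = Real.sqrt ((H + K * (ψ x) ^ 2) / c) := by
    intro x hx
    have h1 := hψH x hx
    have h2 : (deriv ψ x) ^ 2 = (H + K * (ψ x) ^ 2) / c := by
      field_simp
      linarith
    rw [← Real.sqrt_sq (hψ' x hx).le, h2]
  have hexpD : ∀ x : ℝ, HasDerivAt (fun r => Real.exp (-(k * r))) (Real.exp (-(k * x)) * (-k)) x := by
    intro x
    have h1 : HasDerivAt (fun r : ℝ => -(k * r)) (-k) x := by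
      simpa using ((hasDerivAt_id x).const_mul k).fun_neg
    exact h1.exp
  have hec : Continuous fun r : ℝ => Real.exp (-(k * r)) := by fun_prop
  -- H ≥ 0
  have hH0 : 0 ≤ H := by
    by_contra hneg
    push_neg at hneg
    have hmain : ψ R * Real.exp (-(k * R)) ≤ ψ 0 * Real.exp (-(k * 0)) := by
      apply anti_aux hR.le (hψcont.mul hec.continuousOn)
      intro x hx
      refine ⟨_, ?_, (hψd x hx).mul (hexpD x)⟩
      have hdlt : deriv ψ x < k * ψ x := by
        rw [hode x hx]
        calc Real.sqrt ((H + K * (ψ x) ^ 2) / c) < Real.sqrt (K * (ψ x) ^ 2 / c) := by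
              apply Real.sqrt_lt_sqrt (hodenn x hx)
              rw [div_lt_div_iff₀ hc0 hc0]
              nlinarith [mul_neg_of_neg_of_pos hneg hc0]
          _ = k * ψ x := by
              rw [show K * (ψ x) ^ 2 / c = (k * ψ x) ^ 2 by rw [mul_pow, hkk]; ring,
                Real.sqrt_sq (mul_nonneg hk0 (hψpos x hx).le)]
      nlinarith [Real.exp_pos (-(k * x)), hψpos x hx]
    rw [hψ0, hψR] at hmain
    nlinarith [Real.exp_pos (-(k * R))]
  -- Lipschitz-type bound
  have hconv : ∀ y : ℝ, (H + K * y ^ 2) / c = H / c + (k * y) ^ 2 := by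
    intro y
    rw [mul_pow, hkk]
    field_simp
  have hA0 : 0 ≤ H / c := div_nonneg hH0 hc0.le
  have hlip : ∀ u v : ℝ, 0 ≤ v → v ≤ u →
      Real.sqrt ((H + K * u ^ 2) / c) ≤ Real.sqrt ((H + K * v ^ 2) / c) + k * (u - v) := by
    intro u v hv huv
    rw [hconv u, hconv v]
    set sv := Real.sqrt (H / c + (k * v) ^ 2) with hsv
    have hsv0 : 0 ≤ sv := Real.sqrt_nonneg _
    have hsv2 : sv ^ 2 = H / c + (k * v) ^ 2 := Real.sq_sqrt (by positivity)
    have hkv : k * v ≤ sv := by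
      rw [hsv]
      exact (Real.le_sqrt (mul_nonneg hk0 hv) (add_nonneg hA0 (sq_nonneg _))).mpr (by nlinarith)
    have hsq : H / c + (k * u) ^ 2 ≤ (sv + k * (u - v)) ^ 2 := by
      nlinarith [mul_le_mul_of_nonneg_right hkv (mul_nonneg hk0 (sub_nonneg.mpr huv))]
    calc Real.sqrt (H / c + (k * u) ^ 2) ≤ Real.sqrt ((sv + k * (u - v)) ^ 2) :=
          Real.sqrt_le_sqrt hsq
      _ = sv + k * (u - v) := Real.sqrt_sq (by nlinarith [mul_nonneg hk0 (sub_nonneg.mpr huv)])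
  -- main existence claim
  have main : ∃ ξ ∈ Ioo (0 : ℝ) R, ∃ ξ₂ ∈ Ioo (0 : ℝ) R,
      ψ₂ ξ = ψ ξ₂ ∧ deriv ψ₂ ξ > deriv ψ ξ₂ ∧ 0 < deriv ψ ξ₂ := by
    by_contra hcon
    push_neg at hcon
    have key : ∀ ξ ∈ Ioo (0 : ℝ) R, ψ₂ ξ ∈ Ioo (0 : ℝ) 1 →
        deriv ψ₂ ξ ≤ Real.sqrt ((H + K * (ψ₂ ξ) ^ 2) / c) := by
      intro ξ hξ hu
      have hIVT := intermediate_value_Ioo hR.le hψcont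
      rw [hψ0, hψR] at hIVT
      obtain ⟨ξ₂, hξ₂, heq⟩ := hIVT hu
      have h1 : deriv ψ₂ ξ ≤ deriv ψ ξ₂ := by
        by_contra hlt
        push_neg at hlt
        have := hcon ξ hξ ξ₂ hξ₂ heq.symm hlt
        exact absurd (hψ' ξ₂ hξ₂) (not_lt.mpr this)
      have h2 := hode ξ₂ hξ₂
      rw [heq] at h2
      linarith [h1, h2.le, h2.ge]
    obtain ⟨a, haI, hnea⟩ := hne
    have haO : a ∈ Ioo (0 : ℝ) R := by
      rcases eq_or_lt_of_le haI.1 with h0 | h0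
      · exact absurd (by rw [← h0, hψ₂0, hψ0]) hnea
      rcases eq_or_lt_of_le haI.2 with hRe | hRe
      · exact absurd (by rw [hRe, hψ₂R, hψR]) hnea
      · exact ⟨h0, hRe⟩
    rcases lt_or_gt_of_ne hnea with hBc | hAc
    · -- Case B : ψ₂ a < ψ a
      set S : Set ℝ := {r | r ∈ Icc a R ∧ ψ r ≤ ψ₂ r} with hSdef
      have hSsub : S ⊆ Icc 0 R := fun r hr => ⟨haO.1.le.trans hr.1.1, hr.1.2⟩
      have hRS : R ∈ S := ⟨⟨haO.2.le, le_rfl⟩, by rw [hψR, hψ₂R]⟩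
      have hbdd : BddBelow S := ⟨a, fun r hr => hr.1.1⟩
      set t₀ := sInf S with ht₀def
      have ht₀cl : t₀ ∈ closure S := csInf_mem_closure ⟨R, hRS⟩ hbdd
      have ht₀Icc : t₀ ∈ Icc a R :=
        (isClosed_Icc.closure_subset_iff.mpr (fun r hr => hr.1)) ht₀cl
      have ht₀T : t₀ ∈ Icc 0 R := ⟨haO.1.le.trans ht₀Icc.1, ht₀Icc.2⟩
      have ht₀ge : ψ t₀ ≤ ψ₂ t₀ := by
        have h := closure_le_aux (g := fun r => ψ r - ψ₂ r) (v := 0) hSsub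
          (hψcont.sub hψ₂cont) ht₀cl ht₀T (fun x hx => sub_nonpos.mpr hx.2)
        have h2 : ψ t₀ - ψ₂ t₀ ≤ 0 := h
        linarith
      have hlt : ∀ r, a ≤ r → r < t₀ → ψ₂ r < ψ r := by
        intro r h1 h2
        by_contra hle
        push_neg at hle
        have hrS : r ∈ S := ⟨⟨h1, h2.le.trans ht₀Icc.2⟩, hle⟩
        exact absurd (csInf_le hbdd hrS) (not_le.mpr h2)
      have hat₀ : a < t₀ :=
        lt_of_le_of_ne ht₀Icc.1 (fun h => by rw [← h] at ht₀ge; linarith)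
      have ht₀pos : 0 < ψ t₀ := by
        have := hmono (left_mem_Icc.mpr hR.le) ht₀T (haO.1.trans hat₀)
        rwa [hψ0] at this
      obtain ⟨s, has, hst, hpos2⟩ : ∃ s, a ≤ s ∧ s < t₀ ∧ ∀ r, s < r → r ≤ t₀ → 0 < ψ₂ r := by
        by_cases hS₂ : {r | r ∈ Icc a t₀ ∧ ψ₂ r ≤ 0}.Nonempty
        · set S₂ : Set ℝ := {r | r ∈ Icc a t₀ ∧ ψ₂ r ≤ 0} with hS₂def
          have hbdd₂ : BddAbove S₂ := ⟨t₀, fun r hr => hr.1.2⟩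
          set s := sSup S₂ with hsdef
          have hscl : s ∈ closure S₂ := csSup_mem_closure hS₂ hbdd₂
          have hsIcc : s ∈ Icc a t₀ :=
            (isClosed_Icc.closure_subset_iff.mpr (fun r hr => hr.1)) hscl
          have hsub₂ : S₂ ⊆ Icc 0 R :=
            fun r hr => ⟨haO.1.le.trans hr.1.1, hr.1.2.trans ht₀Icc.2⟩
          have hs0 : ψ₂ s ≤ 0 := closure_le_aux hsub₂ hψ₂cont hscl
            ⟨haO.1.le.trans hsIcc.1, hsIcc.2.trans ht₀Icc.2⟩ (fun x hx => hx.2)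
          have hst : s < t₀ :=
            lt_of_le_of_ne hsIcc.2 (fun h => by rw [h] at hs0; linarith)
          refine ⟨s, hsIcc.1, hst, ?_⟩
          intro r h1 h2
          by_contra hle
          push_neg at hle
          have : r ∈ S₂ := ⟨⟨hsIcc.1.trans h1.le, h2⟩, hle⟩
          exact absurd (le_csSup hbdd₂ this) (not_le.mpr h1)
        · refine ⟨a, le_rfl, hat₀, ?_⟩
          intro r h1 h2
          by_contra hle
          push_neg at hle
          exact hS₂ ⟨r, ⟨h1.le, h2⟩, hle⟩
      set ρ := (s + t₀) / 2 with hρdef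
      have hρ1 : s < ρ := by simp only [hρdef]; linarith
      have hρ2 : ρ < t₀ := by simp only [hρdef]; linarith
      have hIccsub : Icc ρ t₀ ⊆ Icc 0 R := fun r hr =>
        ⟨(haO.1.le.trans (has.trans hρ1.le)).trans hr.1, hr.2.trans ht₀Icc.2⟩
      have hmain : ψ₂ t₀ - ψ t₀ ≤ ψ₂ ρ - ψ ρ := by
        apply anti_aux hρ2.le
          ((hψ₂cont.mono hIccsub).sub (hψcont.mono hIccsub))
        intro x hx
        have hxO : x ∈ Ioo (0 : ℝ) R :=
          ⟨by linarith [haO.1, has, hρ1, hx.1], by linarith [hx.2, ht₀Icc.2]⟩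
        have hxlt : ψ₂ x < ψ x := hlt x (by linarith [has, hρ1, hx.1]) hx.2
        have hu : ψ₂ x ∈ Ioo (0 : ℝ) 1 :=
          ⟨hpos2 x (hρ1.trans hx.1) hx.2.le, hxlt.trans (hψlt1 x hxO)⟩
        have hk1 := key x hxO hu
        have hk2 := hode x hxO
        have hk3 : Real.sqrt ((H + K * (ψ₂ x) ^ 2) / c) ≤ Real.sqrt ((H + K * (ψ x) ^ 2) / c) := by
          apply Real.sqrt_le_sqrt
          rw [div_le_div_iff₀ hc0 hc0]
          nlinarith [mul_nonneg (sub_nonneg.mpr hxlt.le) (by linarith [hu.1.le] : (0:ℝ) ≤ ψ x + ψ₂ x),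
            mul_pos hK0 hc0]
        refine ⟨deriv ψ₂ x - deriv ψ x, by rw [hk2]; linarith, (hψ₂d x hxO).sub (hψd x hxO)⟩
      have hρa : ψ₂ ρ < ψ ρ := hlt ρ (has.trans hρ1.le) hρ2
      linarith
    · -- Case A : ψ₂ a > ψ a
      set S : Set ℝ := {r | r ∈ Icc 0 a ∧ ψ₂ r ≤ ψ r} with hSdef
      have hSsub : S ⊆ Icc 0 R := fun r hr => ⟨hr.1.1, hr.1.2.trans haO.2.le⟩
      have h0S : (0 : ℝ) ∈ S := ⟨⟨le_rfl, haO.1.le⟩, by rw [hψ₂0, hψ0]⟩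
      have hSbdd : BddAbove S := ⟨a, fun r hr => hr.1.2⟩
      set t₀ := sSup S with ht₀def
      have ht₀cl : t₀ ∈ closure S := csSup_mem_closure ⟨0, h0S⟩ hSbdd
      have ht₀Icc : t₀ ∈ Icc 0 a :=
        (isClosed_Icc.closure_subset_iff.mpr (fun r hr => hr.1)) ht₀cl
      have ht₀T : t₀ ∈ Icc 0 R := ⟨ht₀Icc.1, ht₀Icc.2.trans haO.2.le⟩
      have ht₀le : ψ₂ t₀ ≤ ψ t₀ := by
        have h := closure_le_aux (g := fun r => ψ₂ r - ψ r) (v := 0) hSsub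
          (hψ₂cont.sub hψcont) ht₀cl ht₀T (fun x hx => sub_nonpos.mpr hx.2)
        have h2 : ψ₂ t₀ - ψ t₀ ≤ 0 := h
        linarith
      have hgt : ∀ r, t₀ < r → r ≤ a → ψ r < ψ₂ r := by
        intro r h1 h2
        by_contra hle
        push_neg at hle
        have hrS : r ∈ S := ⟨⟨ht₀Icc.1.trans h1.le, h2⟩, hle⟩
        exact absurd (le_csSup hSbdd hrS) (not_le.mpr h1)
      have ht₀a : t₀ < a :=
        lt_of_le_of_ne ht₀Icc.2 (fun h => by rw [h] at ht₀le; linarith)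
      obtain ⟨s, hts, hsa, hδs, hlt1⟩ :
          ∃ s, t₀ < s ∧ s ≤ a ∧ ψ s < ψ₂ s ∧ ∀ r, t₀ ≤ r → r < s → ψ₂ r < 1 := by
        by_cases hS₁ : {r | r ∈ Icc t₀ a ∧ 1 ≤ ψ₂ r}.Nonempty
        · set S₁ : Set ℝ := {r | r ∈ Icc t₀ a ∧ 1 ≤ ψ₂ r} with hS₁def
          have hbdd₁ : BddBelow S₁ := ⟨t₀, fun r hr => hr.1.1⟩
          set s := sInf S₁ with hsdef
          have hscl : s ∈ closure S₁ := csInf_mem_closure hS₁ hbdd₁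
          have hsIcc : s ∈ Icc t₀ a :=
            (isClosed_Icc.closure_subset_iff.mpr (fun r hr => hr.1)) hscl
          have hsub₁ : S₁ ⊆ Icc 0 R :=
            fun r hr => ⟨ht₀Icc.1.trans hr.1.1, hr.1.2.trans haO.2.le⟩
          have hs1 : 1 ≤ ψ₂ s := closure_ge_aux hsub₁ hψ₂cont hscl
            ⟨ht₀Icc.1.trans hsIcc.1, hsIcc.2.trans haO.2.le⟩ (fun x hx => hx.2)
          have hψt₀1 : ψ t₀ < 1 := by
            have := hmono ht₀T (right_mem_Icc.mpr hR.le) (ht₀Icc.2.trans_lt haO.2)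
            rwa [hψR] at this
          have hts : t₀ < s :=
            lt_of_le_of_ne hsIcc.1 (fun h => by rw [← h] at hs1; linarith)
          have hψs1 : ψ s < 1 := by
            have := hmono ⟨ht₀Icc.1.trans hsIcc.1, hsIcc.2.trans haO.2.le⟩
              (right_mem_Icc.mpr hR.le) ((hsIcc.2).trans_lt haO.2)
            rwa [hψR] at this
          refine ⟨s, hts, hsIcc.2, by linarith, ?_⟩
          intro r h1 h2
          by_contra hge
          push_neg at hge
          exact absurd (csInf_le hbdd₁ ⟨⟨h1, h2.le.trans hsIcc.2⟩, hge⟩) (not_le.mpr h2)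
        · refine ⟨a, ht₀a, le_rfl, hAc, ?_⟩
          intro r h1 h2
          by_contra hge
          push_neg at hge
          exact hS₁ ⟨r, ⟨h1, h2.le⟩, hge⟩
      have hIccsub : Icc t₀ s ⊆ Icc 0 R := fun r hr =>
        ⟨ht₀Icc.1.trans hr.1, hr.2.trans (hsa.trans haO.2.le)⟩
      have hmain : (ψ₂ s - ψ s) * Real.exp (-(k * s)) ≤
          (ψ₂ t₀ - ψ t₀) * Real.exp (-(k * t₀)) := by
        apply anti_aux hts.le
          (((hψ₂cont.mono hIccsub).sub (hψcont.mono hIccsub)).mul hec.continuousOn)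
        intro x hx
        have hxO : x ∈ Ioo (0 : ℝ) R :=
          ⟨ht₀Icc.1.trans_lt hx.1, (hx.2.trans_le hsa).trans haO.2⟩
        have hxgt : ψ x < ψ₂ x := hgt x hx.1 (hx.2.le.trans hsa)
        have hu : ψ₂ x ∈ Ioo (0 : ℝ) 1 :=
          ⟨(hψpos x hxO).trans hxgt, hlt1 x hx.1.le hx.2⟩
        have hk1 := key x hxO hu
        have hk2 := hode x hxO
        have hk3 := hlip (ψ₂ x) (ψ x) (hψpos x hxO).le hxgt.le
        have hineq : deriv ψ₂ x - deriv ψ x ≤ k * (ψ₂ x - ψ x) := by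
          rw [hk2]; linarith
        refine ⟨_, ?_, ((hψ₂d x hxO).sub (hψd x hxO)).mul (hexpD x)⟩
        rw [Pi.sub_apply]
        nlinarith [Real.exp_pos (-(k * x)), hineq]
      nlinarith [Real.exp_pos (-(k * s)), Real.exp_pos (-(k * t₀)), hδs, ht₀le, hmain]
  obtain ⟨ξ, hξ, ξ₂, hξ₂, heq, hgt2, hpos3⟩ := main
  refine ⟨⟨ξ, hξ, ξ₂, hξ₂, heq, hgt2, hpos3⟩, ?_⟩
  have hval : H < c * (deriv ψ₂ ξ) ^ 2 - K * (ψ₂ ξ) ^ 2 := by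
    have h2 := hψH ξ₂ hξ₂
    rw [heq]
    nlinarith [mul_pos (sub_pos.mpr hgt2) (by linarith : (0:ℝ) < deriv ψ₂ ξ + deriv ψ ξ₂), hc0]
  have h1cont : ContinuousOn (fun r => c * (derivWithin ψ₂ (Icc 0 R) r) ^ 2 - K * (ψ₂ r) ^ 2)
      (Icc 0 R) := by
    have h1 : ContinuousOn (derivWithin ψ₂ (Icc 0 R)) (Icc 0 R) :=
      hψ₂C.continuousOn_derivWithin (uniqueDiffOn_Icc hR) le_rfl
    exact (continuousOn_const.mul (h1.pow 2)).sub (continuousOn_const.mul (hψ₂cont.pow 2))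
  have hsub : (fun r => c * (deriv ψ₂ r) ^ 2 - K * (ψ₂ r) ^ 2) '' Icc 0 R ⊆
      insert (c * (deriv ψ₂ 0) ^ 2 - K * (ψ₂ 0) ^ 2)
        (insert (c * (deriv ψ₂ R) ^ 2 - K * (ψ₂ R) ^ 2)
          ((fun r => c * (derivWithin ψ₂ (Icc 0 R) r) ^ 2 - K * (ψ₂ r) ^ 2) '' Icc 0 R)) := by
    rintro y ⟨x, hx, rfl⟩
    rcases eq_or_lt_of_le hx.1 with h0 | h0
    · rw [← h0]; exact mem_insert _ _
    rcases eq_or_lt_of_le hx.2 with hR' | hR'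
    · rw [hR']; exact mem_insert_of_mem _ (mem_insert _ _)
    · refine mem_insert_of_mem _ (mem_insert_of_mem _ ⟨x, hx, ?_⟩)
      simp only [derivWithin_of_mem_nhds (Icc_mem_nhds h0 hR')]
  have hbdd : BddAbove ((fun r => c * (deriv ψ₂ r) ^ 2 - K * (ψ₂ r) ^ 2) '' Icc 0 R) :=
    BddAbove.mono hsub (((isCompact_Icc.bddAbove_image h1cont).insert _).insert _)
  exact lt_csSup_of_lt hbdd ⟨ξ, ⟨hξ.1.le, hξ.2.le⟩, rfl⟩ hval
end

section
/- The infimum of sup_{r ∈ [0,R]} (c_n φ'(r)² - n(n-1) φ(r)²) over C¹ functions φ : [0,R] → ℝ with φ(0) = 0 and φ(R) = 1 equals n(n-1) csch²((√(n(n-2))/2) R), and is attained (uniquely) by φ(r) = sinh((√(n(n-2))/2) r)/sinh((√(n(n-2))/2) R). -/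
open Real Set

lemma core_mvt {φ dw : ℝ → ℝ} {R a k cc NN : ℝ} (hR : 0 < R) (ha : 0 < a)
    (hk : 0 < k) (hcc : 0 < cc) (hca : cc * a ^ 2 = NN)
    (hder : ∀ r ∈ Icc (0:ℝ) R, HasDerivWithinAt φ (dw r) (Icc 0 R) r)
    (hbound : ∀ r ∈ Icc (0:ℝ) R, cc * dw r ^ 2 ≤ NN / k ^ 2 + NN * φ r ^ 2) :
    ∀ x ∈ Icc (0:ℝ) R, ∀ y ∈ Icc (0:ℝ) R,
      |Real.arsinh (k * φ y) - Real.arsinh (k * φ x)| ≤ a * |y - x| := by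
  intro x hx y hy
  set G : ℝ → ℝ := fun r => Real.arsinh (k * φ r) with hG
  set G' : ℝ → ℝ := fun r => (Real.sqrt (1 + (k * φ r) ^ 2))⁻¹ * (k * dw r) with hG'
  have hGd : ∀ r ∈ Icc (0:ℝ) R, HasDerivWithinAt G (G' r) (Icc 0 R) r := by
    intro r hr
    have := (Real.hasStrictDerivAt_arsinh (k * φ r)).hasDerivAt.comp_hasDerivWithinAt r
      ((hder r hr).const_mul k)
    exact this
  have hbnd : ∀ r ∈ Icc (0:ℝ) R, ‖G' r‖ ≤ a := by
    intro r hr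
    have h1 : (0:ℝ) < 1 + (k * φ r) ^ 2 := by positivity
    have hsq : Real.sqrt (1 + (k * φ r) ^ 2) ^ 2 = 1 + (k * φ r) ^ 2 :=
      Real.sq_sqrt h1.le
    have hspos : 0 < Real.sqrt (1 + (k * φ r) ^ 2) := Real.sqrt_pos.mpr h1
    have hb := hbound r hr
    -- k^2 * dw r ^ 2 ≤ a^2 * (1 + (k * φ r)^2)
    have key : k ^ 2 * dw r ^ 2 ≤ a ^ 2 * (1 + (k * φ r) ^ 2) := by
      have hk2 : (0:ℝ) < k ^ 2 := by positivity
      have := mul_le_mul_of_nonneg_left hb (le_of_lt hk2)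
      have hNN : NN / k ^ 2 * k ^ 2 = NN := div_mul_cancel₀ _ (ne_of_gt hk2)
      nlinarith [this, hca]
    have hG'sq : G' r ^ 2 ≤ a ^ 2 := by
      have he : G' r ^ 2 = (k * dw r) ^ 2 / (1 + (k * φ r) ^ 2) := by
        rw [hG']
        rw [mul_pow, inv_pow, hsq, inv_mul_eq_div]
      rw [he, div_le_iff₀ h1]
      nlinarith [key]
    rw [Real.norm_eq_abs]
    nlinarith [sq_abs (G' r), abs_nonneg (G' r), ha.le]
  have := (convex_Icc (0:ℝ) R).norm_image_sub_le_of_norm_hasDerivWithin_le hGd hbnd hx hy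
  simpa [Real.norm_eq_abs, abs_sub_comm] using this

lemma sup_bound {φ : ℝ → ℝ} {R cc NN : ℝ} (hR : 0 < R) (hcc : 0 < cc)
    (hφ : ContDiffOn ℝ 1 φ (Icc 0 R)) :
    ∀ r ∈ Icc (0:ℝ) R, cc * derivWithin φ (Icc 0 R) r ^ 2 - NN * φ r ^ 2
      ≤ sSup ((fun r => cc * (deriv φ r) ^ 2 - NN * (φ r) ^ 2) '' Icc 0 R) := by
  set dw := derivWithin φ (Icc 0 R) with hdw
  set F : ℝ → ℝ := fun r => cc * (deriv φ r) ^ 2 - NN * (φ r) ^ 2 with hF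
  set Fw : ℝ → ℝ := fun r => cc * dw r ^ 2 - NN * (φ r) ^ 2 with hFw
  have hud : UniqueDiffOn ℝ (Icc (0:ℝ) R) := uniqueDiffOn_Icc hR
  have hdiff : DifferentiableOn ℝ φ (Icc 0 R) := hφ.differentiableOn one_ne_zero
  have hdwc : ContinuousOn dw (Icc 0 R) := hφ.continuousOn_derivWithin hud le_rfl
  have hφc : ContinuousOn φ (Icc 0 R) := hφ.continuousOn
  have hFwc : ContinuousOn Fw (Icc 0 R) := by
    apply ContinuousOn.sub
    · exact (continuousOn_const.mul (hdwc.pow 2))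
    · exact (continuousOn_const.mul (hφc.pow 2))
  -- F ≤ Fw on Icc
  have hFle : ∀ r ∈ Icc (0:ℝ) R, F r ≤ Fw r := by
    intro r hr
    by_cases h : DifferentiableAt ℝ φ r
    · have : dw r = deriv φ r := h.derivWithin (hud r hr)
      simp [hF, hFw, this]
    · have : deriv φ r = 0 := deriv_zero_of_not_differentiableAt h
      simp only [hF, hFw, this]
      have : (0:ℝ) ≤ cc * dw r ^ 2 := by positivity
      nlinarith
  -- interior: F = Fw
  have hFeq : ∀ r ∈ Ioo (0:ℝ) R, F r = Fw r := by
    intro r hr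
    have hda : DifferentiableAt ℝ φ r :=
      hdiff.differentiableAt (Icc_mem_nhds hr.1 hr.2)
    have : dw r = deriv φ r := hda.derivWithin (hud r (Ioo_subset_Icc_self hr))
    simp [hF, hFw, this]
  -- bounded above
  have hbdd : BddAbove (F '' Icc 0 R) := by
    obtain ⟨C, hC⟩ := (isCompact_Icc).exists_bound_of_continuousOn hFwc
    refine ⟨C, ?_⟩
    rintro _ ⟨r, hr, rfl⟩
    calc F r ≤ Fw r := hFle r hr
    _ ≤ |Fw r| := le_abs_self _
    _ ≤ C := by simpa [Real.norm_eq_abs] using hC r hr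
  -- interior bound
  have hIoo : ∀ r ∈ Ioo (0:ℝ) R, Fw r ≤ sSup (F '' Icc 0 R) := by
    intro r hr
    rw [← hFeq r hr]
    exact le_csSup hbdd ⟨r, Ioo_subset_Icc_self hr, rfl⟩
  -- extend to closure
  intro r hr
  have hcl : r ∈ closure (Ioo (0:ℝ) R) := by
    rw [closure_Ioo hR.ne]; exact hr
  have hne : (nhdsWithin r (Ioo (0:ℝ) R)).NeBot :=
    mem_closure_iff_nhdsWithin_neBot.mp hcl
  have htend : Filter.Tendsto Fw (nhdsWithin r (Ioo (0:ℝ) R)) (nhds (Fw r)) :=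
    (hFwc r hr).mono Ioo_subset_Icc_self
  exact le_of_tendsto htend (Filter.eventually_iff_exists_mem.mpr
    ⟨Ioo 0 R, self_mem_nhdsWithin, fun x hx => hIoo x hx⟩)

lemma main_aux {N c a R : ℝ} (hN : 3 ≤ N) (hc : c = 4 * (N - 1) / (N - 2)) (hR : 0 < R)
    (ha : a = Real.sqrt (N * (N - 2)) / 2) (φ : ℝ → ℝ) (hφ : ContDiffOn ℝ 1 φ (Icc 0 R))
    (h0 : φ 0 = 0) (h1 : φ R = 1)
    (hsb : ∀ r ∈ Icc (0:ℝ) R, c * derivWithin φ (Icc 0 R) r ^ 2 - N * (N-1) * φ r ^ 2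
      ≤ sSup ((fun r => c * (deriv φ r) ^ 2 - N * (N-1) * (φ r) ^ 2) '' Icc 0 R))
    (hder : ∀ r ∈ Icc (0:ℝ) R, HasDerivWithinAt φ (derivWithin φ (Icc 0 R) r) (Icc 0 R) r)
    (core : ∀ k : ℝ, 0 < k →
      (∀ r ∈ Icc (0:ℝ) R, c * derivWithin φ (Icc 0 R) r ^ 2
          ≤ N * (N-1) / k ^ 2 + N * (N-1) * φ r ^ 2) →
      ∀ x ∈ Icc (0:ℝ) R, ∀ y ∈ Icc (0:ℝ) R,
        |Real.arsinh (k * φ y) - Real.arsinh (k * φ x)| ≤ a * |y - x|) :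
    N * (N-1) / Real.sinh (a*R) ^ 2
      ≤ sSup ((fun r => c * (deriv φ r) ^ 2 - N * (N-1) * (φ r) ^ 2) '' Icc 0 R) ∧
    (sSup ((fun r => c * (deriv φ r) ^ 2 - N * (N-1) * (φ r) ^ 2) '' Icc 0 R)
        = N * (N-1) / Real.sinh (a*R) ^ 2 →
      ∀ r ∈ Icc (0:ℝ) R, φ r = Real.sinh (a*r) / Real.sinh (a*R)) := by
  have hNN : (0:ℝ) < N * (N-1) := by nlinarith
  have hs : 0 < Real.sinh (a*R) := by
    exact Real.sinh_pos_iff.mpr (mul_pos (by rw [ha]; exact div_pos (Real.sqrt_pos.mpr (by nlinarith)) two_pos) hR)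
  set NN := N * (N-1) with hNNdef
  set S := sSup ((fun r => c * (deriv φ r) ^ 2 - NN * (φ r) ^ 2) '' Icc 0 R) with hSdef
  set M := NN / Real.sinh (a*R) ^ 2 with hMdef
  have hM : 0 < M := by positivity
  have h0mem : (0:ℝ) ∈ Icc (0:ℝ) R := ⟨le_rfl, hR.le⟩
  have hRmem : R ∈ Icc (0:ℝ) R := ⟨hR.le, le_rfl⟩
  -- Part A: M ≤ S
  have partA : M ≤ S := by
    by_contra hlt
    push_neg at hlt
    set H := max S (M/2) with hH
    have hHpos : 0 < H := lt_of_lt_of_le (half_pos hM) (le_max_right _ _)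
    have hHlt : H < M := max_lt hlt (half_lt_self hM)
    set k := Real.sqrt (NN / H) with hk
    have hkpos : 0 < k := Real.sqrt_pos.mpr (by positivity)
    have hk2 : k ^ 2 = NN / H := Real.sq_sqrt (by positivity)
    have hHk : NN / k ^ 2 = H := by
      rw [hk2, div_div_eq_mul_div, mul_comm, mul_div_assoc, div_self hNN.ne', mul_one]
    have hbound : ∀ r ∈ Icc (0:ℝ) R, c * derivWithin φ (Icc 0 R) r ^ 2
        ≤ NN / k ^ 2 + NN * φ r ^ 2 := by
      intro r hr
      have := hsb r hr
      rw [hHk]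
      have hSH : S ≤ H := le_max_left _ _
      linarith
    have hmvt := core k hkpos hbound 0 h0mem R hRmem
    rw [h0, h1, mul_zero, mul_one, Real.arsinh_zero, sub_zero, sub_zero,
      abs_of_pos hR] at hmvt
    have hark : Real.arsinh k ≤ a * R := le_trans (le_abs_self _) hmvt
    have hksinh : k ≤ Real.sinh (a*R) := by
      have := Real.sinh_le_sinh.mpr hark
      rwa [Real.sinh_arsinh] at this
    have hk2le : NN / H ≤ Real.sinh (a*R) ^ 2 := by
      rw [← hk2]
      exact pow_le_pow_left₀ hkpos.le hksinh 2
    have : M ≤ H := by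
      rw [hMdef, div_le_iff₀ (by positivity)]
      rw [div_le_iff₀ hHpos] at hk2le
      linarith
    linarith
  refine ⟨partA, ?_⟩
  -- Part B: equality case
  intro hS r hr
  set k := Real.sinh (a*R) with hk
  have hMk : NN / k ^ 2 = M := rfl
  have hbound : ∀ r ∈ Icc (0:ℝ) R, c * derivWithin φ (Icc 0 R) r ^ 2
      ≤ NN / k ^ 2 + NN * φ r ^ 2 := by
    intro x hx
    have := hsb x hx
    rw [hMk, ← hS]
    linarith
  have hmvt := core k hs hbound
  have e1 := hmvt 0 h0mem r hr
  have e2 := hmvt r hr R hRmem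
  rw [h0, mul_zero, Real.arsinh_zero, sub_zero, sub_zero, abs_of_nonneg hr.1] at e1
  rw [h1, mul_one, hk, Real.arsinh_sinh, abs_of_nonneg (by linarith [hr.2] : (0:ℝ) ≤ R - r)]
    at e2
  have eub : Real.arsinh (k * φ r) ≤ a * r := le_trans (le_abs_self _) e1
  have elb : a * r ≤ Real.arsinh (k * φ r) := by
    have := le_trans (le_abs_self _) e2
    nlinarith
  have heq : Real.arsinh (k * φ r) = a * r := le_antisymm eub elb
  have : k * φ r = Real.sinh (a * r) := by
    rw [← Real.sinh_arsinh (k * φ r), heq]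
  rw [eq_div_iff hs.ne', mul_comm]
  exact this

theorem stmt_8 (n : ℕ) (hn : 3 ≤ n) (c : ℝ) (hc : c = 4 * ((n : ℝ) - 1) / ((n : ℝ) - 2))
    (R : ℝ) (hR : 0 < R) (a : ℝ) (ha : a = Real.sqrt ((n : ℝ) * ((n : ℝ) - 2)) / 2)
    (φ₀ : ℝ → ℝ) (hφ₀ : φ₀ = fun r : ℝ => Real.sinh (a * r) / Real.sinh (a * R)) :
    IsLeast
      {h : ℝ | ∃ φ : ℝ → ℝ, ContDiffOn ℝ 1 φ (Icc 0 R) ∧ φ 0 = 0 ∧ φ R = 1 ∧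
        h = sSup ((fun r => c * (deriv φ r) ^ 2 - (n : ℝ) * ((n : ℝ) - 1) * (φ r) ^ 2) '' Icc 0 R)}
      ((n : ℝ) * ((n : ℝ) - 1) / (Real.sinh (a * R)) ^ 2)
    ∧ sSup ((fun r => c * (deriv φ₀ r) ^ 2 - (n : ℝ) * ((n : ℝ) - 1) * (φ₀ r) ^ 2) '' Icc 0 R)
        = (n : ℝ) * ((n : ℝ) - 1) / (Real.sinh (a * R)) ^ 2
    ∧ ∀ φ : ℝ → ℝ, ContDiffOn ℝ 1 φ (Icc 0 R) → φ 0 = 0 → φ R = 1 →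
        sSup ((fun r => c * (deriv φ r) ^ 2 - (n : ℝ) * ((n : ℝ) - 1) * (φ r) ^ 2) '' Icc 0 R)
          = (n : ℝ) * ((n : ℝ) - 1) / (Real.sinh (a * R)) ^ 2 →
        ∀ r ∈ Icc (0 : ℝ) R, φ r = φ₀ r := by
  set N : ℝ := (n : ℝ) with hNdef
  have hN : (3:ℝ) ≤ N := by rw [hNdef]; exact_mod_cast hn
  have h2ne : N - 2 ≠ 0 := ne_of_gt (by nlinarith)
  have hcc : 0 < c := by rw [hc]; exact div_pos (by nlinarith) (by nlinarith)
  have ha2 : a ^ 2 = N * (N - 2) / 4 := by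
    rw [ha, div_pow, Real.sq_sqrt (by nlinarith : (0:ℝ) ≤ N * (N - 2))]
    norm_num
  have hca : c * a ^ 2 = N * (N - 1) := by
    rw [hc, ha2]
    field_simp
  have hapos : 0 < a := by
    rw [ha]; exact div_pos (Real.sqrt_pos.mpr (by nlinarith)) two_pos
  have hs : 0 < Real.sinh (a * R) := Real.sinh_pos_iff.mpr (mul_pos hapos hR)
  have hNN : (0:ℝ) < N * (N - 1) := by nlinarith
  -- the main estimate applied to an arbitrary admissible φ
  have main : ∀ φ : ℝ → ℝ, ContDiffOn ℝ 1 φ (Icc 0 R) → φ 0 = 0 → φ R = 1 →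
      N * (N-1) / Real.sinh (a*R) ^ 2
        ≤ sSup ((fun r => c * (deriv φ r) ^ 2 - N * (N-1) * (φ r) ^ 2) '' Icc 0 R) ∧
      (sSup ((fun r => c * (deriv φ r) ^ 2 - N * (N-1) * (φ r) ^ 2) '' Icc 0 R)
          = N * (N-1) / Real.sinh (a*R) ^ 2 →
        ∀ r ∈ Icc (0:ℝ) R, φ r = Real.sinh (a*r) / Real.sinh (a*R)) := by
    intro φ hφ h0 h1
    have hder : ∀ r ∈ Icc (0:ℝ) R, HasDerivWithinAt φ (derivWithin φ (Icc 0 R) r)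
        (Icc 0 R) r := fun r hr => ((hφ.differentiableOn one_ne_zero) r hr).hasDerivWithinAt
    exact main_aux hN hc hR ha φ hφ h0 h1 (sup_bound hR hcc hφ) hder
      (fun k hk hb => core_mvt hR hapos hk hcc hca hder hb)
  -- computation for φ₀
  have hderiv0 : ∀ r, HasDerivAt φ₀ (a * Real.cosh (a*r) / Real.sinh (a*R)) r := by
    intro r
    rw [hφ₀]
    have hd1 : HasDerivAt (fun x : ℝ => a * x) a r := by
      simpa using (hasDerivAt_id r).const_mul a
    have hd2 : HasDerivAt (fun x : ℝ => Real.sinh (a * x)) (Real.cosh (a*r) * a) r :=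
      (Real.hasDerivAt_sinh (a*r)).comp r hd1
    have := hd2.div_const (Real.sinh (a*R))
    rw [mul_comm (Real.cosh (a*r)) a] at this
    exact this
  have hval : ∀ r : ℝ, c * (deriv φ₀ r) ^ 2 - N * (N-1) * (φ₀ r) ^ 2
      = N * (N-1) / Real.sinh (a*R) ^ 2 := by
    intro r
    rw [(hderiv0 r).deriv, hφ₀]
    simp only
    have key : c * (a * Real.cosh (a*r)) ^ 2 - N * (N-1) * Real.sinh (a*r) ^ 2
        = N * (N-1) := by nlinarith [Real.cosh_sq (a*r), hca]
    have hrw : c * (a * Real.cosh (a*r) / Real.sinh (a*R)) ^ 2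
        - N * (N-1) * (Real.sinh (a*r) / Real.sinh (a*R)) ^ 2
        = (c * (a * Real.cosh (a*r)) ^ 2 - N * (N-1) * Real.sinh (a*r) ^ 2)
          / Real.sinh (a*R) ^ 2 := by
      field_simp
    rw [hrw, key]
  have himg : ((fun r => c * (deriv φ₀ r) ^ 2 - N * (N-1) * (φ₀ r) ^ 2) '' Icc 0 R)
      = {N * (N-1) / Real.sinh (a*R) ^ 2} := by
    rw [show (fun r => c * (deriv φ₀ r) ^ 2 - N * (N-1) * (φ₀ r) ^ 2)
        = fun _ : ℝ => N * (N-1) / Real.sinh (a*R) ^ 2 from funext hval]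
    exact Set.Nonempty.image_const (nonempty_Icc.mpr hR.le) _
  have hsup0 : sSup ((fun r => c * (deriv φ₀ r) ^ 2 - N * (N-1) * (φ₀ r) ^ 2) '' Icc 0 R)
      = N * (N-1) / Real.sinh (a*R) ^ 2 := by
    rw [himg]; exact csSup_singleton _
  have hφ₀c : ContDiffOn ℝ 1 φ₀ (Icc 0 R) := by
    rw [hφ₀]
    exact ((Real.contDiff_sinh.comp (contDiff_const.mul contDiff_id)).div_const _).of_le
      le_top |>.contDiffOn
  have hφ₀0 : φ₀ 0 = 0 := by simp [hφ₀]
  have hφ₀R : φ₀ R = 1 := by rw [hφ₀]; exact div_self hs.ne'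
  refine ⟨⟨⟨φ₀, hφ₀c, hφ₀0, hφ₀R, hsup0.symm⟩, ?_⟩, hsup0, ?_⟩
  · rintro h ⟨φ, hφ, h0, h1, rfl⟩
    exact (main φ hφ h0 h1).1
  · intro φ hφ h0 h1 hS r hr
    simp only [hφ₀]
    exact (main φ hφ h0 h1).2 hS r hr
end

section
/- Scaling covariance of the hyperbolic Yamabe ODE: let n ≥ 3, c_n = 4(n-1)/(n-2), and suppose u₁ : (-1, 1) → (0, ∞) is C² and solves -c_n(u₁'' + (n-1)u₁') - n(n-1)u₁ + n(n-1)u₁^{(n+2)/(n-2)} = 0. For R > 1 define u_R(r) = (a(r))^{(n-2)/2} u₁(log b(r)) where a(r) = (e² - 1)e^R / (e^{2+R} + e^{2R+r} - e^{2+r} - e^R) and b(r) = (e^{2R} - 1)e^{r+1} / (e^{2+R} + e^{2R+r} - e^{2+r} - e^R). Then for every r ∈ (-R, R) with log b(r) ∈ (-1, 1), u_R solves -c_n(u_R'' + (n-1)u_R') - n(n-1)u_R + n(n-1)u_R^{(n+2)/(n-2)} = 0 at r. -/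
open Real Set

theorem stmt_17 (n : ℕ) (hn : 3 ≤ n) (c : ℝ) (hc : c = 4 * ((n : ℝ) - 1) / ((n : ℝ) - 2))
    (u₁ : ℝ → ℝ) (hu₁C : ContDiffOn ℝ 2 u₁ (Ioo (-1) 1))
    (hu₁pos : ∀ s ∈ Ioo (-1 : ℝ) 1, 0 < u₁ s)
    (hu₁ : ∀ s ∈ Ioo (-1 : ℝ) 1,
      -c * (deriv (deriv u₁) s + ((n : ℝ) - 1) * deriv u₁ s)
        - (n : ℝ) * ((n : ℝ) - 1) * u₁ s
        + (n : ℝ) * ((n : ℝ) - 1) * (u₁ s) ^ ((((n : ℝ) + 2) / ((n : ℝ) - 2)) : ℝ) = 0)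
    (R : ℝ) (hR : 1 < R)
    (D a b : ℝ → ℝ)
    (hD : D = fun r : ℝ =>
      Real.exp (2 + R) + Real.exp (2 * R + r) - Real.exp (2 + r) - Real.exp R)
    (hDpos : ∀ r ∈ Ioo (-R) R, 0 < D r)
    (ha : a = fun r : ℝ => (Real.exp 2 - 1) * Real.exp R / D r)
    (hb : b = fun r : ℝ => (Real.exp (2 * R) - 1) * Real.exp (r + 1) / D r)
    (uR : ℝ → ℝ)
    (huR : uR = fun r : ℝ => (a r) ^ ((((n : ℝ) - 2) / 2) : ℝ) * u₁ (Real.log (b r))) :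
    ∀ r ∈ Ioo (-R) R, Real.log (b r) ∈ Ioo (-1 : ℝ) 1 →
      -c * (deriv (deriv uR) r + ((n : ℝ) - 1) * deriv uR r)
        - (n : ℝ) * ((n : ℝ) - 1) * uR r
        + (n : ℝ) * ((n : ℝ) - 1) * (uR r) ^ ((((n : ℝ) + 2) / ((n : ℝ) - 2)) : ℝ) = 0 := by
  have hN3 : (3:ℝ) ≤ (n:ℝ) := by exact_mod_cast hn
  have hN2 : ((n : ℝ) - 2) ≠ 0 := by linarith
  have hN0 : ((n : ℝ)) ≠ 0 := by linarith
  have hN1 : ((n : ℝ) - 1) ≠ 0 := by linarith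
  set m : ℝ := ((n : ℝ) - 2) / 2 with hm
  set v : ℝ → ℝ := deriv u₁ with hv
  -- derivative of D
  have hDd : ∀ x : ℝ, HasDerivAt D (Real.exp (2*R+x) - Real.exp (2+x)) x := by
    intro x
    rw [hD]
    have h1 : HasDerivAt (fun y : ℝ => Real.exp (2*R+y)) (Real.exp (2*R+x)) x := by
      have := (Real.hasDerivAt_exp (2*R+x)).comp x ((hasDerivAt_id x).const_add (2*R))
      simpa [Function.comp_def] using this
    have h2 : HasDerivAt (fun y : ℝ => Real.exp (2+y)) (Real.exp (2+x)) x := by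
      have := (Real.hasDerivAt_exp (2+x)).comp x ((hasDerivAt_id x).const_add (2:ℝ))
      simpa [Function.comp_def] using this
    simpa [Pi.add_def, Pi.sub_def] using (((hasDerivAt_const x (Real.exp (2+R))).add h1).sub h2).sub
      (hasDerivAt_const x (Real.exp R))
  have hDne : ∀ x ∈ Ioo (-R) R, D x ≠ 0 := fun x hx => (hDpos x hx).ne'
  have hKrel : ∀ x : ℝ, Real.exp (2*R+x) - Real.exp (2+x)
      = D x - (Real.exp 2 - 1) * Real.exp R := by
    intro x
    simp only [hD]
    rw [Real.exp_add 2 R]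
    ring
  have hKpos : 0 < (Real.exp 2 - 1) * Real.exp R := by
    have h1 : (1:ℝ) < Real.exp 2 := by
      have := Real.exp_lt_exp.mpr (show (0:ℝ) < 2 by norm_num)
      simpa [Real.exp_zero] using this
    exact mul_pos (by linarith) (Real.exp_pos R)
  have hapos : ∀ x ∈ Ioo (-R) R, 0 < a x := by
    intro x hx
    rw [ha]
    exact div_pos hKpos (hDpos x hx)
  have haD : ∀ x ∈ Ioo (-R) R, HasDerivAt a ((a x)^2 - a x) x := by
    intro x hx
    have h := (hasDerivAt_const x ((Real.exp 2 - 1) * Real.exp R)).div (hDd x) (hDne x hx)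
    simp only [ha]
    refine h.congr_deriv ?_
    rw [hKrel x]
    field_simp [hDne x hx]
    ring
  have hK2pos : 0 < Real.exp (2*R) - 1 := by
    have := Real.exp_lt_exp.mpr (show (0:ℝ) < 2*R by linarith)
    simpa [Real.exp_zero] using this
  have hbpos : ∀ x ∈ Ioo (-R) R, 0 < b x := by
    intro x hx
    rw [hb]
    exact div_pos (by positivity) (hDpos x hx)
  have hbd : ∀ x ∈ Ioo (-R) R, HasDerivAt b (b x * a x) x := by
    intro x hx
    have h1 : HasDerivAt (fun y : ℝ => (Real.exp (2*R) - 1) * Real.exp (y+1))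
        ((Real.exp (2*R) - 1) * Real.exp (x+1)) x := by
      have := ((Real.hasDerivAt_exp (x+1)).comp x ((hasDerivAt_id x).add_const (1:ℝ))).const_mul
        (Real.exp (2*R) - 1)
      simpa using this
    have h := h1.div (hDd x) (hDne x hx)
    simp only [hb, ha]
    refine h.congr_deriv ?_
    rw [hKrel x]
    field_simp [hDne x hx]
    ring
  have hsd : ∀ x ∈ Ioo (-R) R, HasDerivAt (fun y => Real.log (b y)) (a x) x := by
    intro x hx
    have h := (hbd x hx).log (hbpos x hx).ne'
    simpa [mul_div_assoc, mul_div_cancel_left₀ _ (hbpos x hx).ne'] using h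
  -- the open set where everything happens
  have hsC : ContinuousOn (fun y => Real.log (b y)) (Ioo (-R) R) :=
    fun x hx => (hsd x hx).continuousAt.continuousWithinAt
  have hUopen : IsOpen (Ioo (-R) R ∩ (fun y => Real.log (b y)) ⁻¹' Ioo (-1:ℝ) 1) :=
    hsC.isOpen_inter_preimage isOpen_Ioo isOpen_Ioo
  -- u₁ facts
  have hu₁d : ∀ y ∈ Ioo (-1:ℝ) 1, HasDerivAt u₁ (v y) y := by
    intro y hy
    rw [hv]
    exact ((hu₁C.contDiffAt (isOpen_Ioo.mem_nhds hy)).differentiableAt (by norm_num)).hasDerivAt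
  have hvC : ContDiffOn ℝ 1 v (Ioo (-1:ℝ) 1) := by
    rw [hv]; exact hu₁C.deriv_of_isOpen isOpen_Ioo (by norm_num)
  have hvd : ∀ y ∈ Ioo (-1:ℝ) 1, HasDerivAt v (deriv v y) y := fun y hy =>
    ((hvC.contDiffAt (isOpen_Ioo.mem_nhds hy)).differentiableAt one_ne_zero).hasDerivAt
  -- first derivative of uR on U
  set g : ℝ → ℝ := fun x =>
    ((a x)^2 - a x) * m * (a x) ^ (m-1) * u₁ (Real.log (b x))
      + (a x) ^ m * (v (Real.log (b x)) * a x) with hgdef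
  have huRd : ∀ x ∈ Ioo (-R) R ∩ (fun y => Real.log (b y)) ⁻¹' Ioo (-1:ℝ) 1,
      HasDerivAt uR (g x) x := by
    rintro x ⟨hx1, hx2⟩
    have h1 : HasDerivAt (fun y => (a y) ^ m) (((a x)^2 - a x) * m * (a x) ^ (m-1)) x :=
      (haD x hx1).rpow_const (Or.inl (hapos x hx1).ne')
    have h2 : HasDerivAt (fun y => u₁ (Real.log (b y))) (v (Real.log (b x)) * a x) x :=
      (hu₁d _ hx2).comp x (hsd x hx1)
    rw [huR]
    exact h1.mul h2
  intro r hr hbr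
  have hrU : r ∈ Ioo (-R) R ∩ (fun y => Real.log (b y)) ⁻¹' Ioo (-1:ℝ) 1 := ⟨hr, hbr⟩
  have hAne : a r ≠ 0 := (hapos r hr).ne'
  have hev : deriv uR =ᶠ[nhds r] g :=
    Filter.eventuallyEq_of_mem (hUopen.mem_nhds hrU) (fun x hx => (huRd x hx).deriv)
  have hd1 : deriv uR r = g r := (huRd r hrU).deriv
  -- second derivative
  have hq1 := (((haD r hr).pow 2).sub (haD r hr)).mul_const m
  have hq2 := (haD r hr).rpow_const (p := m - 1) (Or.inl hAne)
  have hq3 : HasDerivAt (fun y => u₁ (Real.log (b y))) (v (Real.log (b r)) * a r) r :=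
    (hu₁d _ hbr).comp r (hsd r hr)
  have hq4 : HasDerivAt (fun y => v (Real.log (b y))) (deriv v (Real.log (b r)) * a r) r :=
    by have := (hvd _ hbr).comp r (hsd r hr); exact this
  have hGd := ((hq1.mul hq2).mul hq3).add
    (((haD r hr).rpow_const (p := m) (Or.inl hAne)).mul (hq4.mul (haD r hr)))
  have hd2 : deriv (deriv uR) r = _ := hev.deriv_eq.trans hGd.deriv
  -- power identities
  have hApos : 0 < a r := hapos r hr
  have hPpos : 0 < u₁ (Real.log (b r)) := hu₁pos _ hbr
  have hmp : m * (((n:ℝ) + 2) / ((n:ℝ) - 2)) = m + 2 := by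
    rw [hm]; field_simp; ring
  have hpow : (a r ^ m * u₁ (Real.log (b r))) ^ ((((n:ℝ) + 2) / ((n:ℝ) - 2)) : ℝ)
      = a r ^ m * (a r)^2 * (u₁ (Real.log (b r))) ^ ((((n:ℝ) + 2) / ((n:ℝ) - 2)) : ℝ) := by
    rw [Real.mul_rpow (Real.rpow_nonneg hApos.le m) hPpos.le, ← Real.rpow_natCast (a r) 2,
      ← Real.rpow_add hApos, show ((2:ℕ):ℝ) = (2:ℝ) by norm_num, ← hmp,
      Real.rpow_mul hApos.le]
  have e1 : a r ^ (m - 1) = a r ^ m / a r := by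
    rw [Real.rpow_sub hApos, Real.rpow_one]
  have e2 : a r ^ (m - 1 - 1) = a r ^ m / a r / a r := by
    rw [Real.rpow_sub hApos, Real.rpow_sub hApos, Real.rpow_one]
  have hEQ := hu₁ _ hbr
  have hPp : (u₁ (Real.log (b r))) ^ ((((n:ℝ) + 2) / ((n:ℝ) - 2)) : ℝ)
      = (c * (deriv v (Real.log (b r)) + ((n:ℝ)-1) * v (Real.log (b r)))
          + (n:ℝ) * ((n:ℝ)-1) * u₁ (Real.log (b r))) / ((n:ℝ) * ((n:ℝ)-1)) := by
    rw [eq_div_iff (by exact mul_ne_zero hN0 hN1)]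
    linarith [hEQ]
  rw [hd2, hd1, huR]
  simp only [hgdef, Pi.mul_apply, Pi.sub_apply, Pi.pow_apply]
  rw [hpow, hPp, e1, e2]
  generalize a r ^ m = B
  rw [hc, hm]
  field_simp
  ring
end

section
/- Comparison of solutions on nested intervals via the blow-up boundary maximum principle (1D version): let n ≥ 3, c_n = 4(n-1)/(n-2), and let u, ū : (a, b) → (0, ∞) be C² with u bounded, ū(r) → ∞ as r → a⁺ and as r → b⁻, and suppose both satisfy -c_n(v'' + (n-1)v') - n(n-1)v + n(n-1)v^{(n+2)/(n-2)} ≤ 0 for v = u (i.e., u is a solution, equality) and ≥ 0 for v = ū on (a, b). If moreover u solves the equation with equality, then u < ū on (a, b). -/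
open Real Set Filter Topology


lemma aux_rpow_sub_le {p u v V : ℝ} (hp : 1 ≤ p) (hu : 0 < u) (huv : u ≤ v) (hvV : v ≤ V) :
    v ^ p - u ^ p ≤ p * V ^ (p - 1) * (v - u) := by
  rcases eq_or_lt_of_le huv with h | h
  · subst h; simp
  · have hcont : ContinuousOn (fun x : ℝ => x ^ p) (Icc u v) := fun x hx =>
      (Real.continuousAt_rpow_const x p (Or.inl (ne_of_gt (lt_of_lt_of_le hu hx.1)))).continuousWithinAt
    have hder : ∀ x ∈ Ioo u v, HasDerivAt (fun x : ℝ => x ^ p) (p * x ^ (p - 1)) x := fun x hx => by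
      simpa [mul_comm] using Real.hasDerivAt_rpow_const (x := x) (p := p) (Or.inl (ne_of_gt (hu.trans hx.1)))
    obtain ⟨ξ, hξ, hs⟩ := exists_hasDerivAt_eq_slope (fun x : ℝ => x ^ p)
      (fun x => p * x ^ (p - 1)) h hcont hder
    have hne : v - u ≠ 0 := sub_ne_zero.2 (ne_of_gt h)
    have heq : v ^ p - u ^ p = p * ξ ^ (p - 1) * (v - u) := by
      rw [hs]; field_simp
    rw [heq]
    have hξV : ξ ^ (p - 1) ≤ V ^ (p - 1) :=
      Real.rpow_le_rpow (le_of_lt (hu.trans hξ.1)) (hξ.2.le.trans hvV) (by linarith)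
    have hp0 : (0:ℝ) < p := by linarith
    have h1 : (0:ℝ) < v - u := sub_pos.2 h
    have h2 : p * ξ ^ (p - 1) ≤ p * V ^ (p - 1) := mul_le_mul_of_nonneg_left hξV hp0.le
    exact mul_le_mul_of_nonneg_right h2 h1.le


lemma aux_min_deriv {a b : ℝ} {f : ℝ → ℝ} (hf : ContDiffOn ℝ 2 f (Ioo a b)) {x : ℝ}
    (hx : x ∈ Ioo a b) (h0 : ∀ y ∈ Ioo a b, 0 ≤ f y) (hx0 : f x = 0) :
    deriv f x = 0 ∧ 0 ≤ deriv (deriv f) x := by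
  have hmem : Ioo a b ∈ 𝓝 x := isOpen_Ioo.mem_nhds hx
  have hmin : IsLocalMin f x := by
    filter_upwards [hmem] with y hy
    rw [hx0]; exact h0 y hy
  have hf1 : ContDiffOn ℝ 1 (deriv f) (Ioo a b) :=
    hf.deriv_of_isOpen isOpen_Ioo (by norm_num)
  have hdiff : DifferentiableOn ℝ f (Ioo a b) := hf.differentiableOn (by norm_num)
  have hdiff' : DifferentiableOn ℝ (deriv f) (Ioo a b) := hf1.differentiableOn one_ne_zero
  have hcdd : ContinuousOn (deriv (deriv f)) (Ioo a b) :=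
    hf1.continuousOn_deriv_of_isOpen isOpen_Ioo le_rfl
  have hd1 : deriv f x = 0 := hmin.deriv_eq_zero
  refine ⟨hd1, ?_⟩
  by_contra hlt
  push_neg at hlt
  have hcont : ContinuousAt (deriv (deriv f)) x := (hcdd x hx).continuousAt hmem
  have hev : ∀ᶠ y in 𝓝 x, deriv (deriv f) y < 0 ∧ y ∈ Ioo a b := by
    filter_upwards [hcont.eventually_lt continuousAt_const hlt, hmem] with y h1 h2
    exact ⟨h1, h2⟩
  obtain ⟨ε, hε, hball⟩ := Metric.eventually_nhds_iff_ball.1 hev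
  set t := x + ε / 2 with ht
  have hxt : x < t := by simp [ht]; linarith
  have hsub : Icc x t ⊆ Metric.ball x ε := by
    intro y hy
    obtain ⟨h1, h2⟩ := hy
    have h2' : y ≤ x + ε / 2 := h2
    rw [Metric.mem_ball, Real.dist_eq, abs_lt]
    constructor <;> linarith
  have hsub2 : Icc x t ⊆ Ioo a b := fun y hy => (hball y (hsub hy)).2
  have hanti' : StrictAntiOn (deriv f) (Icc x t) := by
    apply strictAntiOn_of_deriv_neg (convex_Icc x t) (hdiff'.continuousOn.mono hsub2)
    intro y hy
    rw [interior_Icc] at hy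
    exact (hball y (hsub (Ioo_subset_Icc_self hy))).1
  have hderneg : ∀ y ∈ Ioo x t, deriv f y < 0 := by
    intro y hy
    have := hanti' (left_mem_Icc.2 hxt.le) (Ioo_subset_Icc_self hy) hy.1
    rwa [hd1] at this
  have hanti : StrictAntiOn f (Icc x t) := by
    apply strictAntiOn_of_deriv_neg (convex_Icc x t) (hdiff.continuousOn.mono hsub2)
    intro y hy
    rw [interior_Icc] at hy
    exact hderneg y hy
  have := hanti (left_mem_Icc.2 hxt.le) (right_mem_Icc.2 hxt.le) hxt
  rw [hx0] at this
  exact absurd (h0 t (hsub2 (right_mem_Icc.2 hxt.le))) (by linarith)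

lemma aux_ends {a b : ℝ} (hab : a < b) {v : ℝ → ℝ}
    (ha : Tendsto v (𝓝[>] a) atTop) (hb : Tendsto v (𝓝[<] b) atTop) (T : ℝ) :
    ∃ a₁ b₁ : ℝ, a₁ ∈ Ioo a b ∧ b₁ ∈ Ioo a b ∧ a₁ ≤ b₁ ∧
      ∀ r ∈ Ioo a b, r ∉ Icc a₁ b₁ → T ≤ v r := by
  obtain ⟨a', ha', hsa⟩ := mem_nhdsGT_iff_exists_Ioo_subset.1
    (ha.eventually_ge_atTop T)
  obtain ⟨b', hb', hsb⟩ := mem_nhdsLT_iff_exists_Ioo_subset.1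
    (hb.eventually_ge_atTop T)
  set m := (a + b) / 2 with hm
  have ham : a < m := by simp [hm]; linarith
  have hmb : m < b := by simp [hm]; linarith
  refine ⟨min a' m, max b' m, ⟨lt_min ha' ham, (min_le_right _ _).trans_lt hmb⟩,
    ⟨ham.trans_le (le_max_right _ _), max_lt hb' hmb⟩,
    (min_le_right _ _).trans (le_max_right _ _), ?_⟩
  intro r hr hnot
  rw [mem_Icc, not_and_or] at hnot
  rcases hnot with h | h
  · push_neg at h
    have : r < a' := h.trans_le (min_le_left _ _)
    exact hsa ⟨hr.1, this⟩
  · push_neg at h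
    have : b' < r := (le_max_left _ _).trans_lt h
    exact hsb ⟨this, hr.2⟩


lemma aux_gronwall_zero {O : Set ℝ} (hO : IsOpen O) {x₀ x₁ m Q : ℝ} (hx : x₀ ≤ x₁)
    (hsub : Icc x₀ x₁ ⊆ O) (hm : 0 ≤ m) (hQ : 0 ≤ Q)
    {w w' w'' : ℝ → ℝ}
    (hd1 : ∀ r ∈ O, HasDerivAt w (w' r) r)
    (hd2 : ∀ r ∈ O, HasDerivAt w' (w'' r) r)
    (hc2 : ContinuousOn w'' O)
    (hw0 : ∀ r ∈ Icc x₀ x₁, 0 ≤ w r)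
    (hineq : ∀ r ∈ Icc x₀ x₁, w'' r + m * w' r ≤ Q * w r)
    (h0 : w x₀ = 0) (h0' : w' x₀ = 0) :
    ∀ r ∈ Icc x₀ x₁, w r = 0 := by
  have hcw : ContinuousOn w O := fun r hr => (hd1 r hr).continuousAt.continuousWithinAt
  have hcw' : ContinuousOn w' O := fun r hr => (hd2 r hr).continuousAt.continuousWithinAt
  set g : ℝ → ℝ := fun r => exp (m * r) * w' r with hgdef
  set gd : ℝ → ℝ := fun r => exp (m * r) * (w'' r + m * w' r) with hgddef
  have hg : ∀ r ∈ O, HasDerivAt g (gd r) r := by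
    intro r hr
    have h1 : HasDerivAt (fun x : ℝ => m * x) m r := by
      simpa using (hasDerivAt_id r).const_mul m
    have he : HasDerivAt (fun x : ℝ => exp (m * x)) (exp (m * r) * m) r :=
      (Real.hasDerivAt_exp (m * r)).comp r h1
    have : HasDerivAt (fun x => exp (m * x) * w' x)
        (exp (m * r) * m * w' r + exp (m * r) * w'' r) r := he.mul (hd2 r hr)
    convert this using 1
    show exp (m * r) * (w'' r + m * w' r) = _; ring
  have hgc : ContinuousOn gd O := by
    apply ContinuousOn.mul
    · exact (Real.continuous_exp.comp (continuous_const.mul continuous_id)).continuousOn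
    · exact hc2.add (continuousOn_const.mul hcw')
  set W : ℝ → ℝ := fun r => ∫ t in x₀..r, w t with hWdef
  have hsubO : ∀ r ∈ Icc x₀ x₁, Icc x₀ r ⊆ O := fun r hr =>
    (Icc_subset_Icc le_rfl hr.2).trans hsub
  have hIw : ∀ r ∈ Icc x₀ x₁, IntervalIntegrable w MeasureTheory.volume x₀ r := by
    intro r hr
    apply ContinuousOn.intervalIntegrable
    rw [uIcc_of_le hr.1]
    exact hcw.mono (hsubO r hr)
  have hIw' : ∀ r ∈ Icc x₀ x₁, IntervalIntegrable w' MeasureTheory.volume x₀ r := by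
    intro r hr
    apply ContinuousOn.intervalIntegrable
    rw [uIcc_of_le hr.1]
    exact hcw'.mono (hsubO r hr)
  have hIgd : ∀ r ∈ Icc x₀ x₁, IntervalIntegrable gd MeasureTheory.volume x₀ r := by
    intro r hr
    apply ContinuousOn.intervalIntegrable
    rw [uIcc_of_le hr.1]
    exact hgc.mono (hsubO r hr)
  have hW : ∀ r ∈ Icc x₀ x₁, HasDerivAt W (w r) r := by
    intro r hr
    exact intervalIntegral.integral_hasDerivAt_right (hIw r hr)
      (hcw.stronglyMeasurableAtFilter hO r (hsub hr)) (hd1 r (hsub hr)).continuousAt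
  have hW0 : ∀ r ∈ Icc x₀ x₁, 0 ≤ W r := by
    intro r hr
    exact intervalIntegral.integral_nonneg hr.1 (fun t ht => hw0 t ⟨ht.1, ht.2.trans hr.2⟩)
  set B : ℝ := exp (m * x₁) * Q with hBdef
  have hB : 0 ≤ B := mul_nonneg (exp_pos _).le hQ
  have hgW : ∀ r ∈ Icc x₀ x₁, g r ≤ B * W r := by
    intro r hr
    have hftc : ∫ t in x₀..r, gd t = g r - g x₀ :=
      intervalIntegral.integral_eq_sub_of_hasDerivAt
        (fun t ht => hg t (hsubO r hr (by rwa [uIcc_of_le hr.1] at ht))) (hIgd r hr)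
    have hg0 : g x₀ = 0 := by simp [hgdef, h0']
    have hmono : ∫ t in x₀..r, gd t ≤ ∫ t in x₀..r, B * w t := by
      apply intervalIntegral.integral_mono_on hr.1 (hIgd r hr) ((hIw r hr).const_mul B)
      intro t ht
      have ht' : t ∈ Icc x₀ x₁ := ⟨ht.1, ht.2.trans hr.2⟩
      have h1 : gd t ≤ exp (m * t) * (Q * w t) :=
        mul_le_mul_of_nonneg_left (hineq t ht') (exp_pos _).le
      have h2 : exp (m * t) * (Q * w t) ≤ exp (m * x₁) * (Q * w t) :=
        mul_le_mul_of_nonneg_right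
          (exp_le_exp.2 (mul_le_mul_of_nonneg_left ht'.2 hm))
          (mul_nonneg hQ (hw0 t ht'))
      calc gd t ≤ exp (m * t) * (Q * w t) := h1
        _ ≤ exp (m * x₁) * (Q * w t) := h2
        _ = B * w t := by rw [hBdef]; ring
    have hcmul : ∫ t in x₀..r, B * w t = B * W r := intervalIntegral.integral_const_mul B w
    linarith [hftc, hmono, hcmul, hg0]
  set E : ℝ := exp (-(m * x₀)) with hEdef
  set B' : ℝ := E * B with hB'def
  have hB' : 0 ≤ B' := mul_nonneg (exp_pos _).le hB
  have hw'W : ∀ r ∈ Icc x₀ x₁, w' r ≤ B' * W r := by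
    intro r hr
    have h1 : exp (m * r) * w' r ≤ B * W r := hgW r hr
    have h2 : w' r ≤ (B * W r) / exp (m * r) := by
      rw [le_div_iff₀ (exp_pos _)]
      linarith [mul_comm (w' r) (exp (m * r))]
    have h3 : (B * W r) / exp (m * r) = (B * W r) * exp (-(m * r)) := by
      rw [Real.exp_neg]; ring
    have h4 : exp (-(m * r)) ≤ E := by
      rw [hEdef]
      exact exp_le_exp.2 (by nlinarith [mul_le_mul_of_nonneg_left hr.1 hm])
    have h5 : (B * W r) * exp (-(m * r)) ≤ (B * W r) * E :=
      mul_le_mul_of_nonneg_left h4 (mul_nonneg hB (hW0 r hr))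
    calc w' r ≤ (B * W r) / exp (m * r) := h2
      _ = (B * W r) * exp (-(m * r)) := h3
      _ ≤ (B * W r) * E := h5
      _ = B' * W r := by rw [hB'def]; ring
  have hWmono : ∀ t ∈ Icc x₀ x₁, ∀ r ∈ Icc x₀ x₁, t ≤ r → W t ≤ W r := by
    intro t ht r hr htr
    have hdiff : W r - W t = ∫ s in t..r, w s :=
      intervalIntegral.integral_interval_sub_left (hIw r hr) (hIw t ht)
    have hnn : 0 ≤ ∫ s in t..r, w s :=
      intervalIntegral.integral_nonneg htr (fun s hs => hw0 s ⟨ht.1.trans hs.1, hs.2.trans hr.2⟩)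
    linarith
  set C : ℝ := B' * (x₁ - x₀) with hCdef
  have hC : 0 ≤ C := mul_nonneg hB' (by linarith)
  have hwr : ∀ r ∈ Icc x₀ x₁, w r ≤ C * W r := by
    intro r hr
    have hftc : ∫ t in x₀..r, w' t = w r - w x₀ :=
      intervalIntegral.integral_eq_sub_of_hasDerivAt
        (fun t ht => hd1 t (hsubO r hr (by rwa [uIcc_of_le hr.1] at ht))) (hIw' r hr)
    have hmono : ∫ t in x₀..r, w' t ≤ ∫ t in x₀..r, B' * W r := by
      apply intervalIntegral.integral_mono_on hr.1 (hIw' r hr) intervalIntegrable_const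
      intro t ht
      have ht' : t ∈ Icc x₀ x₁ := ⟨ht.1, ht.2.trans hr.2⟩
      calc w' t ≤ B' * W t := hw'W t ht'
        _ ≤ B' * W r := mul_le_mul_of_nonneg_left (hWmono t ht' r hr ht.2) hB'
    have hconst : ∫ _t in x₀..r, B' * W r = (r - x₀) * (B' * W r) := by
      rw [intervalIntegral.integral_const]; simp [smul_eq_mul]
    have hle : (r - x₀) * (B' * W r) ≤ (x₁ - x₀) * (B' * W r) :=
      mul_le_mul_of_nonneg_right (by linarith [hr.2]) (mul_nonneg hB' (hW0 r hr))
    have : w r ≤ (x₁ - x₀) * (B' * W r) := by linarith [hftc, hmono, hconst, h0]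
    calc w r ≤ (x₁ - x₀) * (B' * W r) := this
      _ = C * W r := by rw [hCdef]; ring
  have hWzero : ∀ r ∈ Icc x₀ x₁, W r = 0 := by
    have key := norm_le_gronwallBound_of_norm_deriv_right_le (f := W) (f' := w)
      (δ := 0) (K := C) (ε := 0) (a := x₀) (b := x₁)
      (fun r hr => (hW r hr).continuousAt.continuousWithinAt)
      (fun r hr => (hW r (Ico_subset_Icc_self hr)).hasDerivWithinAt)
      (by simp [hWdef, intervalIntegral.integral_same])
      ?_
    · intro r hr
      have := key r hr
      rw [gronwallBound_ε0_δ0] at this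
      have h2 : |W r| ≤ 0 := by rwa [Real.norm_eq_abs] at this
      exact le_antisymm (le_of_abs_le h2) (hW0 r hr)
    · intro r hr
      have hr' : r ∈ Icc x₀ x₁ := Ico_subset_Icc_self hr
      rw [Real.norm_eq_abs, Real.norm_eq_abs, abs_of_nonneg (hw0 r hr'),
        abs_of_nonneg (hW0 r hr'), add_zero]
      exact hwr r hr'
  intro r hr
  have h1 := hwr r hr
  rw [hWzero r hr, mul_zero] at h1
  exact le_antisymm h1 (hw0 r hr)



set_option maxHeartbeats 2000000 in
theorem stmt_18 (n : ℕ) (hn : 3 ≤ n) (c : ℝ) (hc : c = 4 * ((n : ℝ) - 1) / ((n : ℝ) - 2))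
    (a b : ℝ) (hab : a < b) (u v : ℝ → ℝ)
    (huC : ContDiffOn ℝ 2 u (Ioo a b)) (hvC : ContDiffOn ℝ 2 v (Ioo a b))
    (hupos : ∀ r ∈ Ioo a b, 0 < u r) (hvpos : ∀ r ∈ Ioo a b, 0 < v r)
    (hubdd : ∃ M : ℝ, ∀ r ∈ Ioo a b, u r ≤ M)
    (hblowa : Tendsto v (nhdsWithin a (Ioi a)) atTop)
    (hblowb : Tendsto v (nhdsWithin b (Iio b)) atTop)
    (hueq : ∀ r ∈ Ioo a b,
      -c * (deriv (deriv u) r + ((n : ℝ) - 1) * deriv u r)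
        - (n : ℝ) * ((n : ℝ) - 1) * u r
        + (n : ℝ) * ((n : ℝ) - 1) * (u r) ^ ((((n : ℝ) + 2) / ((n : ℝ) - 2)) : ℝ) = 0)
    (hvsuper : ∀ r ∈ Ioo a b,
      -c * (deriv (deriv v) r + ((n : ℝ) - 1) * deriv v r)
        - (n : ℝ) * ((n : ℝ) - 1) * v r
        + (n : ℝ) * ((n : ℝ) - 1) * (v r) ^ ((((n : ℝ) + 2) / ((n : ℝ) - 2)) : ℝ) ≥ 0) :
    ∀ r ∈ Ioo a b, u r < v r := by
  have hn3 : (3:ℝ) ≤ (n:ℝ) := by exact_mod_cast hn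
  have hn2 : (0:ℝ) < (n:ℝ) - 2 := by linarith
  set p : ℝ := ((n:ℝ) + 2) / ((n:ℝ) - 2) with hpdef
  set N : ℝ := (n:ℝ) * ((n:ℝ) - 1) with hNdef
  have hp1 : 1 < p := by rw [hpdef, lt_div_iff₀ hn2]; linarith
  have hcpos : (0:ℝ) < c := by rw [hc]; exact div_pos (by linarith) hn2
  have hN0 : (0:ℝ) < N := by rw [hNdef]; exact mul_pos (by linarith) (by linarith)
  -- differentiability package
  have huAt : ∀ r ∈ Ioo a b, DifferentiableAt ℝ u r := fun r hr =>
    ((huC.differentiableOn (by norm_num)) r hr).differentiableAt (isOpen_Ioo.mem_nhds hr)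
  have hvAt : ∀ r ∈ Ioo a b, DifferentiableAt ℝ v r := fun r hr =>
    ((hvC.differentiableOn (by norm_num)) r hr).differentiableAt (isOpen_Ioo.mem_nhds hr)
  have hu1 : ContDiffOn ℝ 1 (deriv u) (Ioo a b) := huC.deriv_of_isOpen isOpen_Ioo (by norm_num)
  have hv1 : ContDiffOn ℝ 1 (deriv v) (Ioo a b) := hvC.deriv_of_isOpen isOpen_Ioo (by norm_num)
  have huAt' : ∀ r ∈ Ioo a b, DifferentiableAt ℝ (deriv u) r := fun r hr =>
    ((hu1.differentiableOn one_ne_zero) r hr).differentiableAt (isOpen_Ioo.mem_nhds hr)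
  have hvAt' : ∀ r ∈ Ioo a b, DifferentiableAt ℝ (deriv v) r := fun r hr =>
    ((hv1.differentiableOn one_ne_zero) r hr).differentiableAt (isOpen_Ioo.mem_nhds hr)
  have hucc : ContinuousOn (deriv (deriv u)) (Ioo a b) :=
    hu1.continuousOn_deriv_of_isOpen isOpen_Ioo le_rfl
  have hvcc : ContinuousOn (deriv (deriv v)) (Ioo a b) :=
    hv1.continuousOn_deriv_of_isOpen isOpen_Ioo le_rfl
  -- bound for u
  obtain ⟨M₀, hM₀⟩ := hubdd
  set M : ℝ := max M₀ 1 with hMdef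
  have hM1 : (1:ℝ) ≤ M := le_max_right _ _
  have hMu : ∀ r ∈ Ioo a b, u r ≤ M := fun r hr => (hM₀ r hr).trans (le_max_left _ _)
  -- main claim
  have hθmain : ∀ θ : ℝ, 0 < θ → θ < 1 → ∀ r ∈ Ioo a b, θ * u r < v r := by
    intro θ hθ0 hθ1
    -- lower bound δ for v
    obtain ⟨a₁, b₁, ha₁, hb₁, hab₁, hvge1⟩ := aux_ends hab hblowa hblowb 1
    have hsub1 : Icc a₁ b₁ ⊆ Ioo a b := Icc_subset_Ioo ha₁.1 hb₁.2
    obtain ⟨xm, hxm, hxmle'⟩ := isCompact_Icc.exists_isMinOn (nonempty_Icc.2 hab₁)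
      (hvC.continuousOn.mono hsub1)
    have hxmle : ∀ y ∈ Icc a₁ b₁, v xm ≤ v y := fun y hy => isMinOn_iff.mp hxmle' y hy
    set δ : ℝ := min 1 (v xm) with hδdef
    have hδ0 : 0 < δ := lt_min one_pos (hvpos xm (hsub1 hxm))
    have hδv : ∀ r ∈ Ioo a b, δ ≤ v r := by
      intro r hr
      by_cases hrK : r ∈ Icc a₁ b₁
      · exact (min_le_right _ _).trans (hxmle r hrK)
      · exact (min_le_left _ _).trans (hvge1 r hr hrK)
    set S : Set ℝ := {C : ℝ | 0 ≤ C ∧ ∀ r ∈ Ioo a b, θ * u r ≤ C * v r} with hSdef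
    have hSne : (M / δ) ∈ S := by
      constructor
      · exact div_nonneg (by linarith) hδ0.le
      · intro r hr
        have h1 : θ * u r ≤ u r := by nlinarith [(hupos r hr).le]
        have h2 : (M / δ) * δ ≤ (M / δ) * v r :=
          mul_le_mul_of_nonneg_left (hδv r hr) (div_nonneg (by linarith) hδ0.le)
        have h3 : (M / δ) * δ = M := div_mul_cancel₀ M hδ0.ne'
        have h4 : u r ≤ M := hMu r hr
        linarith
    have hbdd : BddBelow S := ⟨0, fun C hC => hC.1⟩
    set C₀ : ℝ := sInf S with hC₀def
    have hC₀0 : 0 ≤ C₀ := le_csInf ⟨_, hSne⟩ (fun C hC => hC.1)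
    have hC₀v : ∀ r ∈ Ioo a b, θ * u r ≤ C₀ * v r := by
      intro r hr
      have h : θ * u r / v r ≤ C₀ :=
        le_csInf ⟨_, hSne⟩ (fun C hC => (div_le_iff₀ (hvpos r hr)).2 (hC.2 r hr))
      exact (div_le_iff₀ (hvpos r hr)).1 h
    have hC₀pos : 0 < C₀ := by
      have hmid : (a + b) / 2 ∈ Ioo a b := ⟨by linarith, by linarith⟩
      have h1 := hC₀v _ hmid
      nlinarith [hvpos _ hmid, mul_pos hθ0 (hupos _ hmid)]
    by_contra hcon
    push_neg at hcon
    obtain ⟨r₃, hr₃, hvle⟩ := hcon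
    have hC₀1 : 1 ≤ C₀ := by nlinarith [hC₀v r₃ hr₃, hvpos r₃ hr₃]
    by_cases hex : ∃ r₀ ∈ Ioo a b, θ * u r₀ = C₀ * v r₀
    · -- touching point: pointwise contradiction
      obtain ⟨r₀, hr₀, heq⟩ := hex
      set w : ℝ → ℝ := fun r => C₀ * v r - θ * u r with hwdef
      have hwC : ContDiffOn ℝ 2 w (Ioo a b) :=
        (contDiffOn_const.mul hvC).sub (contDiffOn_const.mul huC)
      have hw0 : ∀ y ∈ Ioo a b, 0 ≤ w y := fun y hy => sub_nonneg.2 (hC₀v y hy)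
      have hwr₀ : w r₀ = 0 := sub_eq_zero.2 heq.symm
      obtain ⟨hd1, hd2⟩ := aux_min_deriv hwC hr₀ hw0 hwr₀
      have hdw : ∀ r ∈ Ioo a b, deriv w r = C₀ * deriv v r - θ * deriv u r := by
        intro r hr
        rw [hwdef]
        rw [deriv_fun_sub ((hvAt r hr).const_mul C₀) ((huAt r hr).const_mul θ),
          deriv_const_mul C₀ (hvAt r hr), deriv_const_mul θ (huAt r hr)]
      have hdd : deriv (deriv w) r₀ = C₀ * deriv (deriv v) r₀ - θ * deriv (deriv u) r₀ := by
        have hev : deriv w =ᶠ[𝓝 r₀] fun r => C₀ * deriv v r - θ * deriv u r := by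
          filter_upwards [isOpen_Ioo.mem_nhds hr₀] with r hr using hdw r hr
        rw [hev.deriv_eq,
          deriv_fun_sub ((hvAt' r₀ hr₀).const_mul C₀) ((huAt' r₀ hr₀).const_mul θ),
          deriv_const_mul C₀ (hvAt' r₀ hr₀), deriv_const_mul θ (huAt' r₀ hr₀)]
      rw [hdw r₀ hr₀] at hd1
      rw [hdd] at hd2
      have ht0 : 0 < θ * u r₀ := mul_pos hθ0 (hupos r₀ hr₀)
      have hP : C₀ * (v r₀) ^ p - θ * (u r₀) ^ p < 0 := by
        set t : ℝ := θ * u r₀ with htdef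
        have hvr : v r₀ = t / C₀ := by
          rw [heq]; field_simp
        have hur : u r₀ = t / θ := by
          rw [htdef]; field_simp
        have h1 : C₀ * (v r₀) ^ p = (C₀ ^ ((1:ℝ) - p)) * t ^ p := by
          rw [hvr, Real.div_rpow ht0.le hC₀pos.le, Real.rpow_sub hC₀pos, Real.rpow_one]
          field_simp
        have h2 : θ * (u r₀) ^ p = (θ ^ ((1:ℝ) - p)) * t ^ p := by
          rw [hur, Real.div_rpow ht0.le hθ0.le, Real.rpow_sub hθ0, Real.rpow_one]
          field_simp
        have h3 : C₀ ^ ((1:ℝ) - p) ≤ 1 :=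
          Real.rpow_le_one_of_one_le_of_nonpos hC₀1 (by linarith)
        have h4 : 1 < θ ^ ((1:ℝ) - p) :=
          (Real.one_lt_rpow_iff_of_pos hθ0).2 (Or.inr ⟨hθ1, by linarith⟩)
        have h5 : 0 < t ^ p := Real.rpow_pos_of_pos ht0 p
        rw [h1, h2]
        nlinarith
      have h1 : 0 ≤ C₀ * (-c * (deriv (deriv v) r₀ + ((n:ℝ) - 1) * deriv v r₀)
          - N * v r₀ + N * (v r₀) ^ p) := mul_nonneg hC₀0 (hvsuper r₀ hr₀)
      have h2 : θ * (-c * (deriv (deriv u) r₀ + ((n:ℝ) - 1) * deriv u r₀)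
          - N * u r₀ + N * (u r₀) ^ p) = 0 := by rw [hueq r₀ hr₀, mul_zero]
      have e1 : 0 ≤ c * (C₀ * deriv (deriv v) r₀ - θ * deriv (deriv u) r₀) :=
        mul_nonneg hcpos.le hd2
      have e2 : N * (C₀ * (v r₀) ^ p - θ * (u r₀) ^ p) < 0 := mul_neg_of_pos_of_neg hN0 hP
      have f1 : c * ((n:ℝ) - 1) * (C₀ * deriv v r₀ - θ * deriv u r₀) = 0 := by
        rw [hd1, mul_zero]
      have f2 : N * (C₀ * v r₀ - θ * u r₀) = 0 := by
        rw [show C₀ * v r₀ - θ * u r₀ = 0 by linarith [heq], mul_zero]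
      linarith [h1, h2, e1, e2, f1, f2]
    · -- no touching point: contradict minimality of C₀
      have hstrict : ∀ r ∈ Ioo a b, θ * u r < C₀ * v r := fun r hr =>
        lt_of_le_of_ne (hC₀v r hr) (fun h => hex ⟨r, hr, h⟩)
      set T : ℝ := 2 * M / C₀ with hTdef
      have hT0 : 0 < T := div_pos (by linarith) hC₀pos
      obtain ⟨a₂, b₂, ha₂, hb₂, hab₂, hvT⟩ := aux_ends hab hblowa hblowb T
      have hsub2 : Icc a₂ b₂ ⊆ Ioo a b := Icc_subset_Ioo ha₂.1 hb₂.2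
      have hφcont : ContinuousOn (fun r => C₀ * v r - θ * u r) (Icc a₂ b₂) :=
        ((continuousOn_const.mul hvC.continuousOn).sub
          (continuousOn_const.mul huC.continuousOn)).mono hsub2
      obtain ⟨xμ, hxμ, hμle'⟩ := isCompact_Icc.exists_isMinOn (nonempty_Icc.2 hab₂) hφcont
      have hμle : ∀ y ∈ Icc a₂ b₂, C₀ * v xμ - θ * u xμ ≤ C₀ * v y - θ * u y :=
        fun y hy => isMinOn_iff.mp hμle' y hy
      set μ : ℝ := C₀ * v xμ - θ * u xμ with hμdef
      have hμ0 : 0 < μ := sub_pos.2 (hstrict xμ (hsub2 hxμ))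
      obtain ⟨xV, hxV, hVle'⟩ := isCompact_Icc.exists_isMaxOn (nonempty_Icc.2 hab₂)
        (hvC.continuousOn.mono hsub2)
      have hVle : ∀ y ∈ Icc a₂ b₂, v y ≤ v xV := fun y hy => isMaxOn_iff.mp hVle' y hy
      set V : ℝ := v xV with hVdef
      have hV0 : 0 < V := hvpos xV (hsub2 hxV)
      set ε : ℝ := min (C₀ / 2) (μ / V) with hεdef
      have hε0 : 0 < ε := lt_min (by linarith) (div_pos hμ0 hV0)
      have hmem : (C₀ - ε) ∈ S := by
        constructor
        · have := min_le_left (C₀ / 2) (μ / V); linarith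
        · intro r hr
          by_cases hrK : r ∈ Icc a₂ b₂
          · have h1 : μ ≤ C₀ * v r - θ * u r := hμle r hrK
            have h2 : ε * v r ≤ μ := by
              calc ε * v r ≤ (μ / V) * V :=
                    mul_le_mul (min_le_right _ _) (hVle r hrK) (hvpos r hr).le
                      (div_pos hμ0 hV0).le
                _ = μ := div_mul_cancel₀ μ hV0.ne'
            nlinarith
          · have hTr : T ≤ v r := hvT r hr hrK
            have h3 : C₀ / 2 ≤ C₀ - ε := by
              have := min_le_left (C₀ / 2) (μ / V); linarith
            have h4 : (C₀ / 2) * T = M := by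
              rw [hTdef]; field_simp
            have h5 : (C₀ / 2) * T ≤ (C₀ - ε) * v r :=
              mul_le_mul h3 hTr hT0.le (by linarith)
            have h6 : θ * u r ≤ u r := by nlinarith [(hupos r hr).le]
            have h7 : u r ≤ M := hMu r hr
            linarith
      have := csInf_le hbdd hmem
      linarith
  -- non-strict comparison
  have huv : ∀ r ∈ Ioo a b, u r ≤ v r := by
    intro r hr
    by_contra hlt
    push_neg at hlt
    have hu0 := hupos r hr
    have hv0 := hvpos r hr
    set θ : ℝ := (v r / u r + 1) / 2 with hθdef
    have h1 : v r / u r < 1 := (div_lt_one hu0).2 hlt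
    have h2 : 0 < v r / u r := div_pos hv0 hu0
    have hθ0 : 0 < θ := by rw [hθdef]; linarith
    have hθ1 : θ < 1 := by rw [hθdef]; linarith
    have hmain := hθmain θ hθ0 hθ1 r hr
    have h3 : v r / u r * u r = v r := div_mul_cancel₀ _ hu0.ne'
    have h4 : v r / u r < θ := by rw [hθdef]; linarith
    have h5 := mul_lt_mul_of_pos_right h4 hu0
    rw [h3] at h5
    linarith
  -- strict comparison
  intro r₁ hr₁
  rcases (huv r₁ hr₁).lt_or_eq with h | heq
  · exact h
  · exfalso
    set w : ℝ → ℝ := fun r => v r - u r with hwdef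
    have hwC : ContDiffOn ℝ 2 w (Ioo a b) := hvC.sub huC
    have hw0 : ∀ y ∈ Ioo a b, 0 ≤ w y := fun y hy => sub_nonneg.2 (huv y hy)
    have hwr₁ : w r₁ = 0 := sub_eq_zero.2 heq.symm
    obtain ⟨hd1, -⟩ := aux_min_deriv hwC hr₁ hw0 hwr₁
    have hD1 : ∀ r ∈ Ioo a b, HasDerivAt w (deriv v r - deriv u r) r := fun r hr =>
      ((hvAt r hr).hasDerivAt).sub ((huAt r hr).hasDerivAt)
    have hD2 : ∀ r ∈ Ioo a b, HasDerivAt (fun r => deriv v r - deriv u r)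
        (deriv (deriv v) r - deriv (deriv u) r) r := fun r hr =>
      ((hvAt' r hr).hasDerivAt).sub ((huAt' r hr).hasDerivAt)
    have hC2 : ContinuousOn (fun r => deriv (deriv v) r - deriv (deriv u) r) (Ioo a b) :=
      hvcc.sub hucc
    have hw'r₁ : deriv v r₁ - deriv u r₁ = 0 := by
      rw [← (hD1 r₁ hr₁).deriv]; exact hd1
    have hzero : ∀ s ∈ Ioo r₁ b, v s = u s := by
      intro s hs
      have hIcc : Icc r₁ s ⊆ Ioo a b := Icc_subset_Ioo hr₁.1 hs.2
      obtain ⟨xV, hxV, hVle'⟩ := isCompact_Icc.exists_isMaxOn (nonempty_Icc.2 hs.1.le)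
        (hvC.continuousOn.mono hIcc)
      have hVle : ∀ y ∈ Icc r₁ s, v y ≤ v xV := fun y hy => isMaxOn_iff.mp hVle' y hy
      set V : ℝ := v xV with hVdef
      have hV0 : 0 < V := hvpos xV (hIcc hxV)
      set K : ℝ := p * V ^ (p - 1) with hKdef
      have hK0 : 0 < K := mul_pos (by linarith) (Real.rpow_pos_of_pos hV0 _)
      set Q : ℝ := N * K / c with hQdef
      have hQ0 : 0 ≤ Q := le_of_lt (div_pos (mul_pos hN0 hK0) hcpos)
      have hineq : ∀ r ∈ Icc r₁ s,
          (deriv (deriv v) r - deriv (deriv u) r)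
            + ((n:ℝ) - 1) * (deriv v r - deriv u r) ≤ Q * w r := by
        intro r hr
        have hrI : r ∈ Ioo a b := hIcc hr
        have hs1 := hvsuper r hrI
        have hs2 := hueq r hrI
        have hL2 : (v r) ^ p - (u r) ^ p ≤ K * (v r - u r) := by
          rw [hKdef]
          have := aux_rpow_sub_le hp1.le (hupos r hrI) (huv r hrI) (hVle r hr)
          linarith
        have hNw : 0 ≤ N * (v r - u r) := mul_nonneg hN0.le (sub_nonneg.2 (huv r hrI))
        have hNL2 : N * ((v r) ^ p - (u r) ^ p) ≤ N * (K * (v r - u r)) :=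
          mul_le_mul_of_nonneg_left hL2 hN0.le
        have hcq : c * (Q * (v r - u r)) = N * (K * (v r - u r)) := by
          rw [hQdef]; field_simp
        have hkey : c * ((deriv (deriv v) r - deriv (deriv u) r)
            + ((n:ℝ) - 1) * (deriv v r - deriv u r)) ≤ c * (Q * (v r - u r)) := by
          linarith [hs1, hs2, hNL2, hNw, hcq]
        have h9 := (mul_le_mul_iff_right₀ hcpos).1 hkey
        have hwr : w r = v r - u r := rfl
        rw [hwr]
        linarith
      have hall := aux_gronwall_zero isOpen_Ioo hs.1.le hIcc
        (show (0:ℝ) ≤ (n:ℝ) - 1 by linarith) hQ0 hD1 hD2 hC2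
        (fun r hr => hw0 r (hIcc hr)) hineq hwr₁ hw'r₁
      have h10 := hall s (right_mem_Icc.2 hs.1.le)
      have hws : w s = v s - u s := rfl
      rw [hws] at h10
      linarith
    obtain ⟨b', hb', hsb⟩ := mem_nhdsLT_iff_exists_Ioo_subset.1
      (hblowb.eventually_gt_atTop M)
    set s : ℝ := (max b' r₁ + b) / 2 with hsdef
    have h1 : max b' r₁ < b := max_lt hb' hr₁.2
    have hs1 : max b' r₁ < s := by rw [hsdef]; linarith
    have hs2 : s < b := by rw [hsdef]; linarith
    have hsI : s ∈ Ioo r₁ b := ⟨(le_max_right b' r₁).trans_lt hs1, hs2⟩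
    have h2 : M < v s := hsb ⟨(le_max_left b' r₁).trans_lt hs1, hs2⟩
    have h3 : v s = u s := hzero s hsI
    have h4 : u s ≤ M := hMu s ⟨hr₁.1.trans hsI.1, hs2⟩
    linarith
end
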